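/- Every recurrent infinite word avoiding the formula ABCA.ACBA.ABCBA is square-free, and no infinite ternary square-free word avoids all occurrences h of ABCA.ACBA.ABCBA with |h(A)|=1, |h(B)|≤2, |h(C)|≤3; consequently λ(ABCA.ACBA.ABCBA) ≥ 4. -/

import Mathlib

/-- The finite factor of the infinite word `w` starting at position `i` of length `n`. -/
def extract {α : Type*} (w : ℕ → α) (i n : ℕ) : List α :=
  (List.range n).map (fun k => w (i + k))

/-- `u` is a (finite) factor of the infinite word `w`. -/
def IsFactorOf {α : Type*} (u : List α) (w : ℕ → α) : Prop :=
  ∃ i, u = extract w i u.length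

/-- A morphism (given on variables/letters) is non-erasing. -/
def NonErasing {V α : Type*} (h : V → List α) : Prop := ∀ v, h v ≠ []

/-- The image of a pattern `p` under the morphism induced by `h`. -/
def patImage {V α : Type*} (h : V → List α) (p : List V) : List α :=
  (p.map h).flatten

/-- `h` is an occurrence of the formula `f` (a set of fragments) in the infinite word `w`:
`h` is non-erasing and the `h`-image of every fragment of `f` is a factor of `w`. -/
def OccursIn {V α : Type*} (f : Set (List V)) (h : V → List α) (w : ℕ → α) : Prop :=
  NonErasing h ∧ ∀ p ∈ f, IsFactorOf (patImage h p) w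

/-- The infinite word `w` avoids the formula `f`. -/
def Avoids {V α : Type*} (w : ℕ → α) (f : Set (List V)) : Prop :=
  ∀ h : V → List α, ¬ OccursIn f h w

/-- An infinite word is recurrent if every factor occurs infinitely often. -/
def Recurrent {α : Type*} (w : ℕ → α) : Prop :=
  ∀ u : List α, IsFactorOf u w → ∀ N, ∃ i ≥ N, u = extract w i u.length

/-- An infinite word is square-free if it has no factor `uu` with `u` nonempty. -/
def SquareFree {α : Type*} (w : ℕ → α) : Prop :=
  ∀ u : List α, u ≠ [] → ¬ IsFactorOf (u ++ u) w

/-- The formula `f'` divides the formula `f`: some non-erasing morphism maps every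
fragment of `f'` to a factor of some fragment of `f`. -/
def Divides {V' V : Type*} (f' : Set (List V')) (f : Set (List V)) : Prop :=
  ∃ h : V' → List V, NonErasing h ∧ ∀ q ∈ f', ∃ p ∈ f, patImage h q <:+: p

/-- The avoidability index of a formula: the least alphabet size over which there is an
infinite word avoiding it. -/
noncomputable def lamIdx {V : Type*} (f : Set (List V)) : ℕ :=
  sInf {n : ℕ | ∃ w : ℕ → Fin n, Avoids w f}

/-- A formula is avoidable if some infinite word over some finite alphabet avoids it. -/
def Avoidable {V : Type*} (f : Set (List V)) : Prop :=
  ∃ (n : ℕ) (w : ℕ → Fin n), Avoids w f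

/-- An infinite word is `r`-free: every factor of the form `x ++ y ++ x` with `x ≠ []`
(a repetition of period `|xy|` and exponent `|xyx|/|xy|`) has exponent `< r`. -/
def AlphaFree {α : Type*} (w : ℕ → α) (r : ℝ) : Prop :=
  ∀ x y : List α, x ≠ [] → IsFactorOf (x ++ y ++ x) w →
    ((2 * x.length + y.length : ℝ) / (x.length + y.length)) < r

/-- An infinite word is `r⁺`-free: every such repetition has exponent `≤ r`. -/
def AlphaPlusFree {α : Type*} (w : ℕ → α) (r : ℝ) : Prop :=
  ∀ x y : List α, x ≠ [] → IsFactorOf (x ++ y ++ x) w →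
    ((2 * x.length + y.length : ℝ) / (x.length + y.length)) ≤ r

/-- A finite word is `r⁺`-free. -/
def AlphaPlusFreeList {α : Type*} (u : List α) (r : ℝ) : Prop :=
  ∀ x y : List α, x ≠ [] → (x ++ y ++ x) <:+: u →
    ((2 * x.length + y.length : ℝ) / (x.length + y.length)) ≤ r

/-- The formula ABCA.ACBA.ABCBA, with variables A=0, B=1, C=2. -/
def impFormula : Set (List (Fin 3)) := {[0,1,2,0], [0,2,1,0], [0,1,2,1,0]}


/-!
If `u u` is a factor of a word in which every factor recurs, then so is `W = u u m u u` and then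
`W n W`; this is the image of ABCBA under `A ↦ u`, `B ↦ u m u`, `C ↦ u n u`, and it contains the
images of ABCA and ACBA. The ternary part is a finite search, certified by a search tree: every
square-free ternary word of length 48 contains a small occurrence.

For `λ ≥ 4`, a ternary word avoiding the formula contains a minimal factorial extendable language
among its factors. Such a language is uniformly recurrent, so a square in it yields `W n W` as
above, and otherwise its words of length 48 are square-free. The infimum defining `λ` is attained:
in the four-letter word `n ↦ (n mod 2, paperfolding bit of n + 1)`, two occurrences of a factor
of length at least `2 ^ k` lie at a distance divisible by `2 ^ (k + 1)`, which the distances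
between the two copies of `A` in ABCA and ABCBA and of `B` in ABCBA cannot all satisfy.
-/

section

variable {α β V : Type*}

section Factors

variable {w : ℕ → α}

@[simp]
lemma extract_length (w : ℕ → α) (i n : ℕ) : (extract w i n).length = n := by
  simp [extract]

lemma extract_add (w : ℕ → α) (i m n : ℕ) :
    extract w i (m + n) = extract w i m ++ extract w (i + m) n := by
  simp [extract, List.range_add, Nat.add_assoc]

lemma extract_comp (g : α → β) (w : ℕ → α) (i n : ℕ) :
    extract (g ∘ w) i n = (extract w i n).map g := by
  simp [extract]

lemma isFactorOf_extract (w : ℕ → α) (i n : ℕ) : IsFactorOf (extract w i n) w :=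
  ⟨i, by rw [extract_length]⟩

lemma eq_extract_of_append_eq {a s b : List α} {i n : ℕ} (h : a ++ s ++ b = extract w i n) :
    s = extract w (i + a.length) s.length := by
  have hn := congrArg List.length h
  simp only [List.length_append, extract_length] at hn
  rw [← hn, extract_add, extract_add] at h
  exact (List.append_inj (List.append_inj h (by simp)).1 (by simp)).2

lemma IsFactorOf.of_infix {s t : List α} (hst : s <:+: t) (ht : IsFactorOf t w) :
    IsFactorOf s w := by
  obtain ⟨a, b, rfl⟩ := hst
  obtain ⟨i, hi⟩ := ht
  exact ⟨i + a.length, eq_extract_of_append_eq hi⟩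

lemma IsFactorOf.exists_extract_eq {x y : List α} (h : IsFactorOf (x ++ y ++ x) w) :
    ∃ i, extract w i x.length = extract w (i + (x.length + y.length)) x.length := by
  obtain ⟨i, hi⟩ := h
  have hfirst := eq_extract_of_append_eq (a := []) (b := y ++ x) (by simpa using hi)
  have hlast := eq_extract_of_append_eq (a := x ++ y) (b := []) (by simpa using hi)
  simp only [List.length_nil, Nat.add_zero, List.length_append] at hfirst hlast
  exact ⟨i, hfirst.symm.trans hlast⟩

lemma Recurrent.exists_append_append_isFactorOf (hw : Recurrent w) {v : List α}
    (hv : IsFactorOf v w) : ∃ z, IsFactorOf (v ++ z ++ v) w := by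
  obtain ⟨i, hi⟩ := hv
  obtain ⟨j, hj, hvj⟩ := hw v ⟨i, hi⟩ (i + v.length)
  refine ⟨extract w (i + v.length) (j - (i + v.length)), i, ?_⟩
  rw [List.length_append, List.length_append, extract_length, extract_add, extract_add, ← hi,
    show i + (v.length + (j - (i + v.length))) = j by omega, ← hvj]

end Factors

def OccursInList (f : Set (List V)) (h : V → List α) (v : List α) : Prop :=
  NonErasing h ∧ ∀ p ∈ f, patImage h p <:+: v

section Occurrences

variable {f : Set (List V)} {h : V → List α}

lemma patImage_map (g : α → β) (h : V → List α) (p : List V) :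
    patImage (fun x => (h x).map g) p = (patImage h p).map g := by
  simp [patImage, List.map_flatten, List.map_map, Function.comp_def]

lemma OccursInList.occursIn {v : List α} {w : ℕ → α} (hocc : OccursInList f h v)
    (hv : IsFactorOf v w) : OccursIn f h w :=
  ⟨hocc.1, fun p hp => hv.of_infix (hocc.2 p hp)⟩

lemma OccursInList.map {v : List α} (g : α → β) (hocc : OccursInList f h v) :
    OccursInList f (fun x => (h x).map g) (v.map g) :=
  ⟨fun x => by simpa using hocc.1 x, fun p hp => by
    rw [patImage_map]; exact (hocc.2 p hp).map g⟩

lemma OccursIn.of_comp {g : α → β} {r : β → α} (hr : Function.LeftInverse r g)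
    {h : V → List β} {w : ℕ → α} (hocc : OccursIn f h (g ∘ w)) :
    OccursIn f (fun x => (h x).map r) w := by
  refine ⟨fun x => by simpa using hocc.1 x, fun p hp => ?_⟩
  obtain ⟨i, hi⟩ := hocc.2 p hp
  refine ⟨i, ?_⟩
  rw [patImage_map, List.length_map]
  conv_lhs => rw [hi]
  rw [extract_comp, List.map_map, hr.comp_eq_id, List.map_id]

end Occurrences

lemma occursInList_of_square {u : List α} (hu : u ≠ []) (m n : List α) :
    OccursInList impFormula ![u, u ++ m ++ u, u ++ n ++ u]
      (u ++ u ++ m ++ (u ++ u) ++ n ++ (u ++ u ++ m ++ (u ++ u))) := by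
  refine ⟨fun x => by fin_cases x <;> simp [hu], fun p hp => ?_⟩
  simp only [impFormula, Set.mem_insert_iff, Set.mem_singleton_iff] at hp
  rcases hp with rfl | rfl | rfl
  · exact ⟨[], m ++ (u ++ u), by simp [patImage]⟩
  · exact ⟨u ++ u ++ m, [], by simp [patImage]⟩
  · exact ⟨[], [], by simp [patImage]⟩

lemma not_avoids_of_square {w : ℕ → α} {u : List α} (hu : u ≠ []) (m n : List α)
    (hw : IsFactorOf (u ++ u ++ m ++ (u ++ u) ++ n ++ (u ++ u ++ m ++ (u ++ u))) w) :
    ¬ Avoids w impFormula :=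
  fun hav => hav _ ((occursInList_of_square hu m n).occursIn hw)

theorem Recurrent.squareFree_of_avoids {w : ℕ → α} (hrec : Recurrent w)
    (hav : Avoids w impFormula) : SquareFree w := by
  intro u hu huu
  obtain ⟨m, hm⟩ := hrec.exists_append_append_isFactorOf huu
  obtain ⟨n, hn⟩ := hrec.exists_append_append_isFactorOf hm
  exact not_avoids_of_square hu m n hn hav

lemma extract_eq_extract_apply {w : ℕ → α} {a b l j : ℕ} (h : extract w a l = extract w b l)
    (hj : j < l) : w (a + j) = w (b + j) := by
  have := congrArg (·[j]?) h
  simpa [extract, hj] using this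

/-- Letter `n` records the parity of `n` and the regular paperfolding bit of `n + 1`, i.e. the
second binary digit of its odd part. -/
def paperfoldingWord (n : ℕ) : Fin 4 :=
  ⟨n % 2 + 2 * (ordCompl[2] (n + 1) / 2 % 2), by omega⟩

lemma paperfoldingWord_ne_of_odd (n : ℕ) {d : ℕ} (hd : Odd d) :
    paperfoldingWord n ≠ paperfoldingWord (n + d) := by
  obtain ⟨c, rfl⟩ := hd
  intro h
  have := congrArg Fin.val h
  simp only [paperfoldingWord] at this
  omega

lemma paperfoldingWord_ne {n k u v : ℕ} (hu : Odd u) (hv : Odd v) (hn : n + 1 = 2 ^ k * v) :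
    paperfoldingWord n ≠ paperfoldingWord (n + 2 ^ (k + 1) * u) := by
  have hshift : n + 2 ^ (k + 1) * u + 1 = 2 ^ k * (v + 2 * u) := by rw [pow_succ]; linarith
  have hodd : ordCompl[2] (n + 1) = v := by
    rw [hn]; exact Nat.ordCompl_pow_mul_of_not_dvd k Nat.prime_two hv.not_two_dvd_nat
  have hodd' : ordCompl[2] (n + 2 ^ (k + 1) * u + 1) = v + 2 * u := by
    rw [hshift]
    exact Nat.ordCompl_pow_mul_of_not_dvd k Nat.prime_two
      (hv.add_even (even_two_mul u)).not_two_dvd_nat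
  have hpar : 2 ∣ 2 ^ (k + 1) * u := Dvd.dvd.mul_right (dvd_pow_self 2 k.succ_ne_zero) u
  obtain ⟨c, rfl⟩ := hu
  intro h
  have := congrArg Fin.val h
  simp only [paperfoldingWord, hodd, hodd'] at this
  omega

lemma exists_two_pow_mul_odd_mem_window (x k : ℕ) :
    ∃ j < 2 ^ (k + 1), ∃ v, Odd v ∧ x + j + 1 = 2 ^ k * v := by
  obtain ⟨v, hv, hvq⟩ : ∃ v, Odd v ∧ (v = x / 2 ^ k + 1 ∨ v = x / 2 ^ k + 2) := by
    rcases Nat.even_or_odd (x / 2 ^ k + 1) with he | ho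
    · exact ⟨_, he.add_one, Or.inr rfl⟩
    · exact ⟨_, ho, Or.inl rfl⟩
  have hdiv := Nat.div_add_mod x (2 ^ k)
  have hmod := Nat.mod_lt x (Nat.two_pow_pos k)
  refine ⟨2 ^ k * v - x - 1, ?_, v, hv, ?_⟩ <;> rcases hvq with rfl | rfl <;>
    simp only [pow_succ, mul_add] at * <;> omega

lemma paperfoldingWord_two_pow_dvd {x y : List (Fin 4)}
    (hxy : IsFactorOf (x ++ y ++ x) paperfoldingWord) {k : ℕ} (hk : 2 ^ k ≤ x.length) :
    2 ^ (k + 1) ∣ x.length + y.length := by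
  obtain ⟨i, hi⟩ := hxy.exists_extract_eq
  set d := x.length + y.length
  by_contra hnd
  obtain ⟨t, u, hu, hd⟩ := Nat.exists_eq_two_pow_mul_odd (n := d) (by rintro h; simp [h] at hnd)
  have htk : t ≤ k := by
    by_contra! hkt
    exact hnd (hd ▸ (pow_dvd_pow 2 hkt).mul_right u)
  have hagree : ∀ j < x.length, paperfoldingWord (i + j) = paperfoldingWord (i + d + j) :=
    fun j hj => extract_eq_extract_apply hi hj
  have hlen : 2 ^ t ≤ x.length := (Nat.pow_le_pow_right two_pos htk).trans hk
  rcases t with _ | s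
  · apply paperfoldingWord_ne_of_odd i (d := d) (by simpa [hd] using hu)
    simpa using hagree 0 (lt_of_lt_of_le (Nat.two_pow_pos 0) hlen)
  · obtain ⟨j, hj, v, hv, hjv⟩ := exists_two_pow_mul_odd_mem_window i s
    apply paperfoldingWord_ne hu hv hjv
    rw [hagree j (by omega), ← hd]
    ring_nf

lemma false_of_two_adic {P Q R : ℕ} (hP : 0 < P) (hQ : 0 < Q)
    (hA : ∀ k, 2 ^ k ≤ P → 2 ^ (k + 1) ∣ P + (Q + R))
    (hA' : ∀ k, 2 ^ k ≤ P → 2 ^ (k + 1) ∣ P + (Q + R + Q))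
    (hB : ∀ k, 2 ^ k ≤ Q → 2 ^ (k + 1) ∣ Q + R) : False := by
  set k := Nat.log 2 P
  have hk : 2 ^ k ≤ P := Nat.pow_log_le_self 2 hP.ne'
  have hPlt : P < 2 ^ (k + 1) := Nat.lt_pow_succ_log_self one_lt_two P
  have hdvdQ : 2 ^ (k + 1) ∣ Q := by
    have := hA' k hk
    rwa [← add_assoc, Nat.dvd_add_right (hA k hk)] at this
  have hdvdQR : 2 ^ (k + 1) ∣ Q + R :=
    (pow_dvd_pow 2 (Nat.le_succ _)).trans (hB (k + 1) (Nat.le_of_dvd hQ hdvdQ))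
  have hdvdP : 2 ^ (k + 1) ∣ P := (Nat.dvd_add_left hdvdQR).mp (hA k hk)
  exact absurd (Nat.le_of_dvd hP hdvdP) (not_le.mpr hPlt)

theorem paperfoldingWord_avoids : Avoids paperfoldingWord impFormula := by
  rintro h ⟨hne, hocc⟩
  have hABCA : IsFactorOf (h 0 ++ (h 1 ++ h 2) ++ h 0) paperfoldingWord := by
    simpa [patImage] using hocc [0, 1, 2, 0] (by simp [impFormula])
  have hABCBA : IsFactorOf (h 0 ++ (h 1 ++ h 2 ++ h 1) ++ h 0) paperfoldingWord := by
    simpa [patImage] using hocc [0, 1, 2, 1, 0] (by simp [impFormula])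
  have hBCB : IsFactorOf (h 1 ++ h 2 ++ h 1) paperfoldingWord :=
    hABCBA.of_infix (List.infix_append _ _ _)
  refine false_of_two_adic (R := (h 2).length) (List.length_pos_iff.mpr (hne 0))
    (List.length_pos_iff.mpr (hne 1)) (fun k hk => ?_) (fun k hk => ?_) (fun k hk => ?_)
  · simpa using paperfoldingWord_two_pow_dvd hABCA hk
  · simpa [add_assoc] using paperfoldingWord_two_pow_dvd hABCBA hk
  · simpa using paperfoldingWord_two_pow_dvd hBCB hk

def IsSquareFreeList (v : List α) : Prop :=
  ∀ x : List α, x ≠ [] → ¬ x ++ x <:+: v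

lemma IsSquareFreeList.map {v : List α} {g : α → β} {r : β → α}
    (hr : Function.LeftInverse r g) (hv : IsSquareFreeList v) : IsSquareFreeList (v.map g) := by
  intro x hx hxx
  refine hv (x.map r) (by simpa using hx) ?_
  simpa [List.map_map, hr.comp_eq_id] using hxx.map r

lemma IsSquareFreeList.of_isFactorOf {v : List α} {w : ℕ → α} (hw : SquareFree w)
    (hv : IsFactorOf v w) : IsSquareFreeList v :=
  fun x hx hxx => hw x hx (hv.of_infix hxx)

def HasSmallOccurrence (v : List α) : Prop :=
  ∃ h : Fin 3 → List α, OccursInList impFormula h v ∧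
    (h 0).length = 1 ∧ (h 1).length ≤ 2 ∧ (h 2).length ≤ 3

lemma HasSmallOccurrence.map {v : List α} (g : α → β) (hv : HasSmallOccurrence v) :
    HasSmallOccurrence (v.map g) := by
  obtain ⟨h, hocc, h0, h1, h2⟩ := hv
  exact ⟨fun x => (h x).map g, hocc.map g, by simpa using h0, by simpa using h1,
    by simpa using h2⟩

lemma hasSmallOccurrence_of_infix {v A B C : List α} (hA : A.length = 1) (hB : B ≠ [])
    (hB' : B.length ≤ 2) (hC : C ≠ []) (hC' : C.length ≤ 3) (h₁ : A ++ B ++ C ++ A <:+: v)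
    (h₂ : A ++ C ++ B ++ A <:+: v) (h₃ : A ++ B ++ C ++ B ++ A <:+: v) :
    HasSmallOccurrence v := by
  refine ⟨![A, B, C], ⟨fun x => ?_, fun p hp => ?_⟩, hA, hB', hC'⟩
  · fin_cases x <;> simp [hB, hC, ← List.length_pos_iff, hA]
  · simp only [impFormula, Set.mem_insert_iff, Set.mem_singleton_iff] at hp
    rcases hp with rfl | rfl | rfl
    · simpa [patImage] using h₁
    · simpa [patImage] using h₂
    · simpa [patImage] using h₃

lemma infix_of_isPrefixOf_drop [BEq α] [LawfulBEq α] {s v : List α} {i : ℕ}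
    (h : s.isPrefixOf (v.drop i)) : s <:+: v :=
  (List.isPrefixOf_iff_prefix.mp h).isInfix.trans (List.drop_suffix i v).isInfix

/-- `t.Valid n v` certifies that every word `r ++ v` with `r.length = n` contains a square or a
small occurrence. Words are extended to the left, so a new square shows up as a prefix (leaf
`sq`); a leaf `oc A B C i j k` gives the occurrence `(A, B, C)` and the positions of its three
fragments. -/
inductive SearchTree where
  | sq
  | oc (A B C : List (Fin 3)) (i j k : ℕ)
  | nd (t₀ t₁ t₂ : SearchTree)

namespace SearchTree

def Valid : SearchTree → ℕ → List (Fin 3) → Bool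
  | sq, _, v =>
    (List.range (v.length / 2)).any fun l => (v.take (l + 1) ++ v.take (l + 1)).isPrefixOf v
  | oc A B C i j k, _, v =>
    A.length == 1 && 0 < B.length && B.length ≤ 2 && 0 < C.length && C.length ≤ 3 &&
      (A ++ B ++ C ++ A).isPrefixOf (v.drop i) && (A ++ C ++ B ++ A).isPrefixOf (v.drop j) &&
      (A ++ B ++ C ++ B ++ A).isPrefixOf (v.drop k)
  | nd _ _ _, 0, _ => false
  | nd t₀ t₁ t₂, n + 1, v =>
    t₀.Valid n (0 :: v) && t₁.Valid n (1 :: v) && t₂.Valid n (2 :: v)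

theorem Valid.hasSmallOccurrence {t : SearchTree} {n : ℕ} {v : List (Fin 3)}
    (ht : t.Valid n v = true) (r : List (Fin 3)) (hr : r.length = n)
    (hsf : IsSquareFreeList (r ++ v)) : HasSmallOccurrence (r ++ v) := by
  induction t generalizing n v r with
  | sq =>
    simp only [Valid, List.any_eq_true, List.mem_range] at ht
    obtain ⟨l, hl, hsq⟩ := ht
    have hv : v <:+: r ++ v := (List.suffix_append r v).isInfix
    refine absurd ((infix_of_isPrefixOf_drop (i := 0) hsq).trans hv) (hsf _ ?_)
    rw [Ne, ← List.length_eq_zero_iff, List.length_take]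
    omega
  | oc A B C i j k =>
    simp only [Valid, Bool.and_eq_true, decide_eq_true_eq, beq_iff_eq] at ht
    obtain ⟨⟨⟨⟨⟨⟨⟨hA, hB⟩, hB'⟩, hC⟩, hC'⟩, h₁⟩, h₂⟩, h₃⟩ := ht
    have hv : v <:+: r ++ v := (List.suffix_append r v).isInfix
    exact hasSmallOccurrence_of_infix hA (List.length_pos_iff.mp hB) hB'
      (List.length_pos_iff.mp hC) hC' ((infix_of_isPrefixOf_drop h₁).trans hv)
      ((infix_of_isPrefixOf_drop h₂).trans hv) ((infix_of_isPrefixOf_drop h₃).trans hv)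
  | nd t₀ t₁ t₂ ih₀ ih₁ ih₂ =>
    obtain _ | n := n
    · simp [Valid] at ht
    have hr0 : r ≠ [] := by rintro rfl; simp at hr
    obtain ⟨r', c, rfl⟩ : ∃ r' c, r = r' ++ [c] :=
      ⟨r.dropLast, r.getLast hr0, (List.dropLast_append_getLast hr0).symm⟩
    simp only [List.length_append, List.length_singleton, Nat.add_right_cancel_iff] at hr
    simp only [Valid, Bool.and_eq_true] at ht
    rw [List.append_assoc, List.singleton_append] at hsf ⊢
    fin_cases c
    · exact ih₀ ht.1.1 r' hr hsf
    · exact ih₁ ht.1.2 r' hr hsf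
    · exact ih₂ ht.2 r' hr hsf

end SearchTree

def searchTree : SearchTree :=
  .nd .sq (.nd .sq .sq (.nd (.nd .sq (.nd (.nd .sq .sq (.nd (.nd .sq (.nd .sq .sq (.nd (.nd .sq .sq
  (.nd .sq (.nd (.nd .sq (.nd .sq .sq (.nd (.nd .sq (.nd (.nd .sq .sq (.nd (.nd .sq (.nd .sq .sq
  (.nd (.nd .sq .sq .sq) (.nd (.oc [0] [1] [2] 11 8 0) .sq .sq) .sq)) .sq) (.oc [1] [2] [0] 0 3 8)
  .sq)) .sq .sq) (.nd .sq .sq .sq)) (.nd (.oc [0] [1] [2] 4 7 0) .sq .sq) .sq)) (.oc [2] [0] [1] 0 5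
  8)) .sq (.nd (.nd .sq (.nd (.nd .sq .sq (.nd (.nd .sq (.nd .sq .sq (.nd (.nd .sq .sq .sq) (.nd
  (.nd .sq (.nd .sq .sq (.nd (.nd .sq (.nd (.nd .sq .sq (.nd (.nd .sq (.nd .sq .sq (.nd (.nd .sq .sq
  (.nd .sq (.nd (.oc [0] [1] [2] 0 3 13) .sq (.nd (.nd .sq (.nd (.nd .sq .sq (.nd (.nd .sq (.nd .sq
  .sq .sq) .sq) (.oc [1] [2] [0] 0 3 6) .sq)) .sq (.nd .sq (.nd (.oc [0] [1, 2] [1, 0, 2] 18 24 0)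
  .sq .sq) .sq)) .sq) .sq .sq)) .sq)) (.nd .sq .sq .sq) .sq)) .sq) (.oc [1] [2] [0] 0 3 17) .sq))
  .sq .sq) (.nd .sq (.oc [1] [2, 0] [2, 1, 0] 0 6 15) .sq)) .sq .sq)) (.oc [2] [0] [1] 0 3 6)) .sq
  .sq) .sq)) .sq) (.oc [1] [2] [0] 0 3 6) .sq)) .sq (.nd .sq (.nd (.nd .sq (.nd .sq .sq (.nd (.nd
  .sq (.nd (.nd .sq .sq (.nd (.nd .sq (.nd .sq .sq (.nd (.nd .sq .sq (.nd .sq (.nd (.oc [0] [1] [2]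
  0 3 13) .sq (.nd (.nd .sq (.nd (.nd .sq .sq (.nd (.nd .sq (.nd .sq .sq (.nd (.nd .sq .sq .sq) (.nd
  (.oc [0] [1, 2] [1, 0, 2] 0 6 22) .sq .sq) .sq)) .sq) (.oc [1] [2] [0] 0 3 6) .sq)) .sq .sq) .sq)
  .sq .sq)) .sq)) (.nd (.nd .sq (.nd .sq .sq (.nd (.nd .sq (.nd .sq .sq .sq) (.nd .sq (.oc [1] [2,
  0] [2, 1, 0] 0 6 22) .sq)) .sq .sq)) (.oc [2] [0] [1] 0 3 6)) .sq .sq) .sq)) .sq) (.oc [1] [2] [0]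
  0 3 13) .sq)) .sq .sq) (.nd .sq (.nd (.oc [0] [1] [2] 0 3 6) .sq (.nd (.nd .sq (.nd (.nd .sq .sq
  (.nd (.nd .sq (.nd .sq .sq (.nd (.nd .sq .sq (.nd .sq (.nd (.oc [0] [1] [2] 0 3 17) .sq (.nd (.nd
  .sq (.nd (.nd .sq .sq .sq) .sq (.nd .sq (.nd (.nd .sq (.nd .sq .sq (.nd (.nd .sq (.nd (.nd .sq .sq
  (.oc [2] [0, 1] [0, 2, 1] 18 24 0)) .sq .sq) .sq) .sq .sq)) (.oc [2] [0] [1] 0 3 13)) .sq .sq)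
  .sq)) .sq) .sq .sq)) .sq)) (.oc [1] [2, 0] [2, 1, 0] 9 0 20) .sq)) .sq) (.oc [1] [2] [0] 0 3 6)
  .sq)) .sq (.nd .sq .sq .sq)) .sq) .sq .sq)) .sq)) .sq .sq)) (.oc [2] [0] [1] 0 3 13)) .sq .sq)
  .sq)) .sq) .sq .sq)) .sq)) (.nd (.nd .sq (.nd .sq .sq (.nd (.nd .sq (.nd (.nd .sq .sq (.nd (.nd
  .sq (.nd .sq .sq .sq) .sq) (.oc [1] [0] [2] 3 0 10) .sq)) .sq .sq) (.nd .sq (.nd (.oc [0] [1] [2]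
  0 3 6) .sq (.nd (.nd .sq (.nd (.nd .sq .sq (.nd (.nd .sq (.nd .sq .sq (.nd (.nd .sq .sq (.nd .sq
  (.oc [1] [2, 0] [2, 1, 0] 11 17 0) .sq)) (.nd (.nd .sq (.nd .sq .sq (.nd (.nd .sq (.nd (.nd .sq
  .sq (.oc [2] [0, 1] [0, 2, 1] 11 17 0)) .sq .sq) .sq) .sq .sq)) (.oc [2] [0] [1] 0 3 6)) .sq .sq)
  .sq)) .sq) (.oc [1] [2] [0] 0 3 6) .sq)) .sq (.nd .sq (.nd (.nd .sq (.nd .sq .sq (.nd (.nd .sq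
  (.nd (.nd .sq .sq (.nd (.nd .sq (.nd .sq .sq (.nd (.nd .sq .sq (.nd .sq (.oc [1] [2, 0] [2, 1, 0]
  18 24 0) .sq)) (.nd (.nd .sq (.nd .sq .sq (.nd (.nd .sq (.nd .sq .sq .sq) (.nd .sq (.nd (.oc [0]
  [1] [2] 0 3 6) .sq (.nd (.nd .sq (.nd (.oc [0] [1, 2] [1, 0, 2] 9 0 20) .sq .sq) .sq) .sq .sq))
  .sq)) .sq .sq)) (.oc [2] [0] [1] 0 3 6)) .sq .sq) .sq)) .sq) (.oc [1] [2] [0] 0 3 13) .sq)) .sq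
  .sq) (.nd .sq .sq .sq)) .sq .sq)) (.oc [2] [0] [1] 0 3 17)) .sq .sq) .sq)) .sq) .sq .sq)) .sq))
  .sq .sq)) (.oc [2] [0] [1] 0 3 6)) .sq .sq) .sq)) .sq) (.nd (.nd .sq (.nd .sq .sq (.nd (.nd .sq
  (.nd (.nd .sq .sq .sq) .sq .sq) (.nd .sq (.oc [1] [2] [0] 6 9 0) .sq)) (.nd (.oc [0] [1] [2] 4 9
  0) .sq .sq) .sq)) .sq) .sq (.nd (.nd .sq (.nd (.nd .sq .sq .sq) .sq (.nd .sq (.nd (.nd .sq (.nd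
  .sq .sq (.nd (.nd .sq (.nd (.nd .sq .sq (.nd (.nd .sq (.oc [1] [0] [2] 4 14 0) .sq) (.nd (.oc [0]
  [1] [2] 0 5 8) .sq (.nd (.nd .sq (.nd (.nd .sq .sq .sq) .sq .sq) (.nd .sq (.oc [1] [2] [0] 4 7 0)
  .sq)) .sq .sq)) .sq)) .sq .sq) (.nd .sq (.oc [1] [2] [0] 11 8 0) .sq)) .sq .sq)) (.oc [2] [0] [1]
  0 3 8)) .sq .sq) .sq)) (.nd .sq (.oc [1] [2] [0] 4 7 0) .sq)) .sq .sq)) .sq)) .sq .sq) (.nd .sq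
  (.nd (.nd .sq (.nd .sq .sq (.nd (.nd .sq (.nd (.nd .sq .sq (.nd (.nd .sq (.nd .sq .sq (.nd (.nd
  .sq .sq (.nd .sq (.nd (.nd .sq (.nd .sq .sq (.nd (.nd .sq (.nd (.nd .sq .sq .sq) .sq .sq) (.nd .sq
  .sq .sq)) (.nd (.oc [0] [1] [2] 4 7 0) .sq .sq) .sq)) (.oc [2] [0] [1] 0 5 8)) .sq (.nd (.oc [0]
  [2] [1] 4 14 0) .sq .sq)) .sq)) (.nd (.oc [0] [1] [2] 11 8 0) .sq .sq) .sq)) .sq) (.oc [1] [2] [0]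
  0 3 8) .sq)) .sq .sq) .sq) (.nd (.oc [0] [1] [2] 4 7 0) .sq .sq) .sq)) (.nd (.nd .sq (.nd (.nd .sq
  .sq (.nd .sq (.nd (.nd .sq (.nd .sq .sq (.nd (.nd .sq (.oc [1] [0] [2] 0 5 8) (.nd .sq (.nd (.nd
  .sq (.nd .sq .sq .sq) (.nd (.nd .sq (.nd (.nd .sq .sq .sq) .sq (.oc [2] [1] [0] 0 3 8)) .sq) .sq
  .sq)) .sq (.nd (.oc [0] [2] [1] 4 7 0) .sq .sq)) .sq)) (.nd (.oc [0] [1] [2] 4 14 0) .sq .sq)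
  .sq)) .sq) .sq (.nd (.oc [0] [2] [1] 11 8 0) .sq .sq)) .sq)) .sq (.nd (.nd .sq .sq (.nd .sq (.nd
  (.nd .sq (.nd .sq .sq (.oc [2] [1] [0] 6 9 0)) .sq) .sq (.nd (.oc [0] [2] [1] 4 9 0) .sq .sq))
  .sq)) (.nd (.oc [0] [1] [2] 6 9 0) .sq .sq) .sq)) .sq) .sq .sq)) .sq (.nd (.nd .sq (.nd (.nd .sq
  .sq (.nd (.nd .sq (.nd .sq .sq (.nd (.nd .sq .sq (.nd .sq (.nd (.oc [0] [2] [1] 3 0 10) .sq (.nd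
  (.nd .sq (.nd (.nd .sq .sq .sq) .sq (.nd .sq (.nd (.nd .sq (.nd .sq .sq (.nd (.nd .sq (.nd (.nd
  .sq .sq (.nd (.nd .sq (.nd .sq .sq (.nd (.nd .sq .sq (.nd .sq (.nd (.oc [0] [1] [2] 0 3 13) .sq
  (.nd (.nd .sq (.nd (.nd .sq .sq (.nd (.nd .sq (.nd .sq .sq (.nd (.nd .sq .sq .sq) (.oc [1] [2, 0]
  [2, 1, 0] 38 0 9) .sq)) .sq) (.oc [1] [2] [0] 0 3 6) .sq)) .sq (.nd .sq (.nd .sq .sq .sq) .sq))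
  .sq) .sq .sq)) .sq)) (.oc [1] [2, 0] [2, 1, 0] 27 0 16) .sq)) .sq) (.oc [1] [2] [0] 0 3 13) .sq))
  .sq .sq) (.nd .sq (.nd (.oc [0] [1] [2] 0 3 6) .sq (.nd (.nd .sq (.nd (.nd .sq .sq (.nd (.nd .sq
  (.nd .sq .sq (.nd (.nd .sq .sq (.nd .sq (.nd (.oc [0] [1] [2] 0 3 17) .sq (.nd (.nd .sq (.nd (.nd
  .sq .sq .sq) .sq .sq) .sq) .sq .sq)) .sq)) (.oc [1] [2, 0] [2, 1, 0] 9 0 20) .sq)) .sq) (.oc [1]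
  [2] [0] 0 3 6) .sq)) .sq (.nd .sq .sq .sq)) .sq) .sq .sq)) .sq)) .sq .sq)) (.oc [2] [0] [1] 0 3
  13)) .sq .sq) .sq)) .sq) .sq .sq)) .sq)) (.nd (.nd .sq (.nd .sq .sq (.nd (.nd .sq (.nd (.nd .sq
  .sq (.nd (.nd .sq (.nd .sq .sq (.nd (.nd .sq .sq (.nd .sq (.oc [1] [2, 0] [2, 1, 0] 22 13 0) .sq))
  (.nd .sq .sq .sq) .sq)) .sq) (.oc [1] [2] [0] 0 3 17) .sq)) .sq .sq) (.nd .sq (.nd (.oc [0] [1]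
  [2] 0 3 6) .sq (.nd (.nd .sq (.nd (.nd .sq .sq (.nd (.nd .sq (.nd .sq .sq .sq) .sq) (.oc [1] [2]
  [0] 0 3 6) .sq)) .sq (.nd .sq (.nd (.oc [0] [1, 2] [1, 0, 2] 11 17 0) .sq .sq) .sq)) .sq) .sq
  .sq)) .sq)) .sq .sq)) (.oc [2] [0] [1] 0 3 6)) .sq .sq) .sq)) .sq) (.oc [1] [2] [0] 0 3 6) .sq))
  .sq (.nd .sq (.nd (.nd .sq (.nd .sq .sq (.nd (.nd .sq (.nd (.nd .sq .sq (.nd (.nd .sq (.nd .sq .sq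
  (.nd (.nd .sq .sq (.nd .sq (.nd (.oc [0] [1] [2] 0 3 13) .sq (.nd (.nd .sq (.nd (.nd .sq .sq (.nd
  (.nd .sq (.nd .sq .sq (.nd (.nd .sq .sq .sq) (.oc [1] [2, 0] [2, 1, 0] 27 0 9) .sq)) .sq) (.oc [1]
  [2] [0] 0 3 6) .sq)) .sq (.nd .sq (.nd (.nd .sq (.nd .sq .sq (.nd (.nd .sq (.nd (.nd .sq .sq .sq)
  .sq .sq) (.nd .sq (.nd (.oc [0] [1] [2] 0 3 6) .sq (.nd (.nd .sq (.nd (.nd .sq .sq (.oc [2] [0, 1]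
  [0, 2, 1] 0 6 22)) .sq (.nd .sq .sq .sq)) .sq) .sq .sq)) .sq)) .sq .sq)) (.oc [2] [0] [1] 0 3 13))
  .sq .sq) .sq)) .sq) .sq .sq)) .sq)) (.nd (.nd .sq (.nd .sq .sq (.nd (.nd .sq (.nd .sq .sq .sq)
  (.nd .sq (.nd (.oc [0] [1] [2] 0 3 6) .sq (.nd (.nd .sq (.nd (.oc [0] [1, 2] [1, 0, 2] 9 0 20) .sq
  (.nd .sq (.nd (.nd .sq (.nd .sq .sq (.nd (.nd .sq (.nd (.nd .sq .sq (.nd (.nd .sq (.nd .sq .sq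
  .sq) .sq) (.oc [1] [2] [0] 0 3 13) .sq)) .sq .sq) (.nd .sq .sq .sq)) .sq .sq)) (.oc [2] [0] [1] 0
  3 17)) .sq .sq) .sq)) .sq) .sq .sq)) .sq)) .sq .sq)) (.oc [2] [0] [1] 0 3 6)) .sq .sq) .sq)) .sq)
  (.oc [1] [2] [0] 0 3 13) .sq)) .sq .sq) (.nd .sq (.nd (.oc [0] [1] [2] 0 3 6) .sq (.nd (.nd .sq
  (.nd (.nd .sq .sq (.nd (.nd .sq (.nd .sq .sq (.nd (.nd .sq .sq (.nd .sq (.nd (.oc [0] [1] [2] 0 3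
  17) .sq (.nd (.nd .sq (.nd (.nd .sq .sq .sq) .sq (.nd .sq (.nd (.nd .sq (.nd .sq .sq (.nd (.nd .sq
  (.nd (.nd .sq .sq (.oc [2] [0, 1] [0, 2, 1] 18 24 0)) .sq .sq) (.nd .sq (.nd (.oc [0] [1] [2] 0 3
  6) .sq (.nd (.nd .sq (.nd (.nd .sq .sq .sq) .sq (.nd .sq .sq .sq)) .sq) .sq .sq)) .sq)) .sq .sq))
  (.oc [2] [0] [1] 0 3 13)) .sq .sq) .sq)) .sq) .sq .sq)) .sq)) (.nd (.oc [0] [1, 2] [1, 0, 2] 0 6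
  15) .sq .sq) .sq)) .sq) (.oc [1] [2] [0] 0 3 6) .sq)) .sq .sq) .sq) .sq .sq)) .sq)) .sq .sq)) (.nd
  (.nd .sq (.nd (.nd .sq .sq (.oc [2] [0] [1] 4 7 0)) .sq (.nd (.nd .sq .sq (.nd .sq (.nd (.oc [0]
  [1] [2] 0 3 8) .sq (.nd (.nd .sq (.nd (.nd .sq .sq (.oc [2] [0] [1] 11 8 0)) .sq (.nd .sq (.nd
  (.nd .sq (.nd .sq .sq (.oc [2] [1] [0] 4 14 0)) .sq) .sq .sq) .sq)) .sq) .sq .sq)) .sq)) (.nd .sq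
  .sq .sq) .sq)) .sq) (.oc [1] [2] [0] 0 5 8) .sq)) .sq .sq) .sq)) .sq) .sq .sq)) .sq)) (.nd (.nd
  .sq (.nd .sq .sq .sq) (.nd (.nd .sq (.nd (.nd .sq .sq (.nd .sq (.nd (.nd .sq (.nd .sq .sq (.nd
  (.oc [0] [1] [2] 3 0 10) (.nd (.nd .sq .sq (.nd (.nd .sq (.nd (.nd .sq .sq .sq) .sq (.oc [2] [1]
  [0] 0 3 6)) .sq) (.nd .sq .sq (.nd (.nd .sq (.oc [1] [0] [2] 0 3 13) (.nd .sq (.nd (.nd .sq (.nd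
  .sq .sq (.nd (.oc [0] [2] [1] 0 3 6) (.nd (.nd .sq .sq (.nd (.nd .sq (.nd (.nd .sq .sq (.nd .sq
  (.nd (.nd .sq (.nd .sq .sq (.nd (.oc [0] [2] [1] 0 3 17) (.nd (.nd .sq .sq (.nd (.nd .sq .sq .sq)
  (.nd .sq .sq (.nd (.nd .sq (.oc [1] [0] [2] 0 3 13) .sq) .sq .sq)) .sq)) .sq .sq) .sq)) .sq) .sq
  (.oc [2] [1, 0] [1, 2, 0] 9 0 20)) .sq)) .sq (.oc [2] [1] [0] 0 3 6)) .sq) (.nd .sq .sq .sq) .sq))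
  .sq .sq) .sq)) (.nd (.nd .sq (.nd (.nd .sq .sq (.nd .sq (.nd (.nd .sq (.nd .sq .sq (.nd (.oc [0]
  [2] [1] 0 3 13) (.nd (.nd .sq .sq (.nd (.nd .sq (.nd (.nd .sq .sq (.nd .sq (.nd (.nd .sq .sq .sq)
  .sq (.nd (.oc [0] [2, 1] [2, 0, 1] 0 6 22) .sq .sq)) .sq)) .sq (.oc [2] [1] [0] 0 3 6)) .sq) (.nd
  .sq .sq (.nd .sq .sq .sq)) .sq)) .sq .sq) .sq)) .sq) .sq (.nd (.oc [0] [2, 1] [2, 0, 1] 0 24 11)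
  .sq .sq)) .sq)) .sq (.oc [2] [1] [0] 0 3 13)) .sq) .sq .sq)) .sq .sq) .sq)) .sq .sq)) .sq)) .sq
  .sq) .sq)) .sq) .sq (.nd (.nd .sq (.oc [1] [0] [2] 0 3 6) (.nd .sq (.nd (.nd .sq (.nd .sq .sq (.nd
  (.oc [0] [2] [1] 0 3 6) (.nd (.nd .sq .sq (.nd (.nd .sq (.nd (.nd .sq .sq (.nd .sq (.nd (.nd .sq
  (.nd .sq .sq (.oc [2] [1, 0] [1, 2, 0] 11 17 0)) .sq) .sq (.nd (.nd .sq (.oc [1] [0] [2] 0 3 6)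
  .sq) .sq .sq)) .sq)) .sq (.oc [2] [1] [0] 0 3 6)) .sq) (.nd .sq .sq (.nd (.oc [0] [2, 1] [2, 0, 1]
  11 17 0) .sq .sq)) .sq)) .sq .sq) .sq)) (.nd (.nd .sq (.nd (.nd .sq .sq (.nd .sq (.nd (.nd .sq
  (.nd .sq .sq (.nd (.oc [0] [2] [1] 0 3 13) (.nd (.nd .sq .sq (.nd (.nd .sq (.nd (.nd .sq .sq (.nd
  .sq (.nd (.nd .sq .sq .sq) .sq (.nd (.nd .sq (.oc [1] [0] [2] 0 3 6) (.nd .sq (.nd (.nd .sq (.oc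
  [1] [0, 2] [0, 1, 2] 9 0 20) (.nd (.nd .sq (.nd (.nd .sq .sq .sq) .sq (.oc [2] [1] [0] 0 3 17))
  .sq) .sq .sq)) .sq .sq) .sq)) .sq .sq)) .sq)) .sq (.oc [2] [1] [0] 0 3 6)) .sq) (.nd .sq .sq (.nd
  (.oc [0] [2, 1] [2, 0, 1] 18 24 0) .sq .sq)) .sq)) .sq .sq) .sq)) .sq) .sq (.nd .sq .sq .sq))
  .sq)) .sq (.oc [2] [0] [1] 3 0 10)) .sq) .sq .sq)) .sq .sq) .sq)) .sq .sq)) .sq)) .sq (.nd (.nd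
  .sq .sq (.nd .sq (.nd (.oc [0] [1] [2] 0 3 8) .sq (.nd (.nd .sq (.nd (.nd .sq .sq (.oc [2] [0] [1]
  11 8 0)) .sq (.nd .sq (.nd (.nd .sq (.nd .sq .sq (.oc [2] [1] [0] 4 14 0)) (.nd (.nd .sq (.nd (.nd
  .sq .sq (.oc [2] [0] [1] 4 7 0)) .sq (.nd (.nd .sq .sq (.nd .sq (.nd (.oc [0] [1] [2] 0 3 8) .sq
  .sq) .sq)) (.nd .sq .sq .sq) .sq)) .sq) (.oc [1] [2] [0] 0 5 8) .sq)) .sq .sq) .sq)) .sq) .sq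
  .sq)) .sq)) (.nd (.nd .sq (.nd .sq .sq (.oc [2] [1] [0] 4 7 0)) .sq) .sq .sq) .sq)) .sq) (.nd .sq
  .sq (.nd (.nd .sq (.nd (.nd .sq .sq (.nd (.nd .sq (.oc [1] [0] [2] 4 7 0) .sq) (.nd (.nd .sq (.nd
  .sq .sq (.nd (.oc [0] [2] [1] 0 3 8) (.nd (.nd .sq .sq (.nd (.nd .sq (.oc [1] [0] [2] 11 8 0) .sq)
  (.nd .sq .sq (.nd (.nd .sq (.nd (.nd .sq .sq .sq) .sq (.oc [2] [1] [0] 0 5 8)) (.nd .sq (.oc [1]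
  [2] [0] 4 14 0) .sq)) .sq .sq)) .sq)) .sq .sq) .sq)) .sq) .sq (.nd .sq .sq .sq)) .sq)) .sq (.nd
  .sq (.nd (.nd .sq (.nd .sq .sq (.oc [2] [1] [0] 4 9 0)) (.nd (.nd .sq (.oc [1] [0] [2] 6 9 0) .sq)
  (.nd .sq .sq .sq) .sq)) .sq .sq) .sq)) (.nd .sq (.nd (.nd .sq (.nd .sq .sq (.nd (.oc [0] [2] [1] 0
  3 6) (.nd (.nd .sq .sq (.nd (.nd .sq (.nd (.nd .sq .sq (.nd .sq (.nd (.nd .sq (.nd .sq .sq (.nd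
  (.oc [0] [2] [1] 0 3 17) (.nd (.nd .sq .sq (.nd (.nd .sq .sq .sq) (.nd .sq .sq (.nd (.nd .sq (.oc
  [1] [0] [2] 0 3 13) (.nd .sq (.nd (.nd .sq (.nd .sq .sq (.nd (.oc [0] [2] [1] 0 3 6) (.nd (.nd .sq
  .sq (.nd (.nd .sq (.nd (.nd .sq .sq .sq) .sq (.oc [2] [1] [0] 0 3 6)) .sq) (.nd .sq .sq .sq) .sq))
  .sq .sq) .sq)) (.nd (.nd .sq (.oc [1] [0, 2] [0, 1, 2] 18 24 0) .sq) .sq .sq)) .sq .sq) .sq)) .sq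
  .sq)) .sq)) .sq .sq) .sq)) .sq) .sq (.nd (.oc [0] [2, 1] [2, 0, 1] 0 6 15) .sq .sq)) .sq)) .sq
  (.oc [2] [1] [0] 0 3 6)) .sq) (.nd .sq .sq (.nd (.nd .sq (.oc [1] [2] [0] 3 0 10) .sq) .sq .sq))
  .sq)) .sq .sq) .sq)) (.nd (.nd .sq (.nd (.nd .sq .sq (.nd .sq (.nd (.nd .sq (.nd .sq .sq (.nd (.oc
  [0] [2] [1] 0 3 13) (.nd (.nd .sq .sq (.nd (.nd .sq (.nd (.nd .sq .sq (.nd .sq (.nd (.nd .sq .sq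
  .sq) .sq (.nd (.oc [0] [2, 1] [2, 0, 1] 0 6 22) .sq .sq)) .sq)) .sq (.oc [2] [1] [0] 0 3 6)) .sq)
  (.nd .sq .sq (.nd (.nd .sq (.oc [1] [0] [2] 0 3 13) (.nd .sq (.nd (.nd .sq (.nd .sq .sq (.nd (.oc
  [0] [2] [1] 0 3 6) (.nd (.nd .sq .sq (.nd (.nd .sq (.oc [1] [0, 2] [0, 1, 2] 0 6 22) .sq) (.nd .sq
  .sq .sq) .sq)) .sq .sq) .sq)) (.nd (.nd .sq (.nd (.nd .sq .sq .sq) .sq (.oc [2] [1] [0] 0 3 13))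
  .sq) .sq .sq)) .sq .sq) .sq)) .sq .sq)) .sq)) .sq .sq) .sq)) .sq) .sq (.nd (.nd .sq (.oc [1] [0]
  [2] 0 3 6) (.nd .sq (.nd (.nd .sq (.nd .sq .sq (.nd (.oc [0] [2] [1] 0 3 6) (.nd (.nd .sq .sq (.nd
  (.oc [0] [2, 1] [2, 0, 1] 9 0 20) (.nd .sq .sq (.nd (.nd .sq (.oc [1] [0] [2] 0 3 17) (.nd .sq
  (.nd (.nd .sq (.nd .sq .sq .sq) (.nd (.nd .sq (.nd (.nd .sq .sq (.nd .sq (.nd (.nd .sq (.nd .sq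
  .sq (.oc [2] [1, 0] [1, 2, 0] 18 24 0)) .sq) .sq (.nd (.nd .sq (.oc [1] [0] [2] 0 3 6) .sq) .sq
  .sq)) .sq)) .sq (.oc [2] [1] [0] 0 3 13)) .sq) .sq .sq)) .sq .sq) .sq)) .sq .sq)) .sq)) .sq .sq)
  .sq)) (.nd .sq .sq .sq)) .sq .sq) .sq)) .sq .sq)) .sq)) .sq (.nd (.oc [0] [2] [1] 0 5 8) (.nd (.nd
  .sq (.nd .sq .sq (.oc [2] [1] [0] 4 7 0)) (.nd (.nd .sq .sq .sq) (.nd .sq .sq (.nd (.nd .sq (.oc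
  [1] [0] [2] 0 3 8) (.nd .sq (.nd (.nd .sq (.nd .sq .sq (.oc [2] [1] [0] 11 8 0)) .sq) .sq .sq)
  .sq)) .sq .sq)) .sq)) .sq .sq) .sq)) .sq) .sq .sq)) .sq .sq) .sq)) .sq .sq)) .sq)) .sq .sq) .sq))
  (.nd (.nd .sq (.nd (.nd .sq .sq (.nd .sq (.nd (.nd .sq (.nd .sq .sq (.nd (.nd .sq (.oc [1] [0] [2]
  0 5 8) (.nd .sq (.nd (.nd .sq (.nd .sq .sq .sq) (.nd (.nd .sq (.nd (.nd .sq .sq (.nd .sq (.nd (.nd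
  .sq (.nd .sq .sq (.nd (.nd .sq (.oc [1] [0] [2] 0 5 8) .sq) (.nd (.oc [0] [1] [2] 4 14 0) .sq .sq)
  .sq)) .sq) .sq (.nd (.oc [0] [2] [1] 11 8 0) .sq .sq)) .sq)) .sq (.oc [2] [1] [0] 0 3 8)) .sq) .sq
  .sq)) .sq (.nd (.oc [0] [2] [1] 4 7 0) .sq .sq)) .sq)) (.nd (.nd .sq .sq (.nd (.nd .sq (.nd (.nd
  .sq .sq (.nd .sq (.nd (.nd .sq (.nd .sq .sq .sq) .sq) .sq (.nd (.nd .sq (.oc [1] [0] [2] 0 3 6)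
  (.nd .sq (.nd (.nd .sq (.nd .sq .sq (.oc [2] [1, 0] [1, 2, 0] 0 6 15)) (.nd (.nd .sq (.nd (.nd .sq
  .sq (.nd .sq (.nd (.nd .sq (.nd .sq .sq (.nd (.oc [0] [2] [1] 0 3 13) (.nd (.nd .sq .sq (.nd (.nd
  .sq (.nd (.nd .sq .sq (.nd .sq (.nd (.nd .sq .sq .sq) .sq (.nd (.nd .sq (.oc [1] [0] [2] 0 3 6)
  .sq) .sq .sq)) .sq)) .sq (.oc [2] [1] [0] 0 3 6)) .sq) (.nd .sq .sq (.nd (.oc [0] [2, 1] [2, 0, 1]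
  18 24 0) .sq .sq)) .sq)) .sq .sq) .sq)) .sq) .sq (.nd .sq .sq .sq)) .sq)) .sq (.oc [2] [1] [0] 0 3
  17)) .sq) .sq .sq)) .sq .sq) .sq)) .sq .sq)) .sq)) .sq (.oc [2] [1] [0] 0 3 6)) .sq) (.nd .sq .sq
  (.nd (.nd .sq (.oc [1] [0] [2] 0 3 13) (.nd .sq (.nd (.nd .sq (.nd .sq .sq (.nd (.oc [0] [2] [1] 0
  3 6) (.nd (.nd .sq .sq (.nd (.nd .sq (.nd (.nd .sq .sq (.nd .sq (.nd (.nd .sq (.nd .sq .sq (.nd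
  (.oc [0] [2] [1] 0 3 17) (.nd (.nd .sq .sq (.nd (.nd .sq .sq .sq) (.nd .sq .sq (.nd (.nd .sq (.oc
  [1] [0] [2] 0 3 13) (.nd .sq (.nd (.nd .sq (.nd .sq .sq .sq) (.nd (.nd .sq (.oc [1] [0, 2] [0, 1,
  2] 18 24 0) .sq) .sq .sq)) .sq .sq) .sq)) .sq .sq)) .sq)) .sq .sq) .sq)) .sq) .sq (.oc [2] [1, 0]
  [1, 2, 0] 9 0 20)) .sq)) .sq (.oc [2] [1] [0] 0 3 6)) .sq) (.nd .sq .sq .sq) .sq)) .sq .sq) .sq))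
  (.nd (.nd .sq (.nd (.nd .sq .sq (.nd .sq (.nd (.nd .sq (.nd .sq .sq (.nd (.oc [0] [2] [1] 0 3 13)
  (.nd (.nd .sq .sq (.nd (.nd .sq (.nd (.nd .sq .sq (.nd .sq (.nd (.nd .sq .sq .sq) .sq (.nd (.oc
  [0] [2, 1] [2, 0, 1] 0 6 22) .sq .sq)) .sq)) .sq (.oc [2] [1] [0] 0 3 6)) .sq) (.nd .sq .sq (.nd
  (.nd .sq (.oc [1] [0] [2] 0 3 13) .sq) .sq .sq)) .sq)) .sq .sq) .sq)) .sq) .sq (.nd (.nd .sq (.oc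
  [1] [0] [2] 0 3 6) (.nd .sq (.nd (.nd .sq (.nd .sq .sq (.oc [2] [1, 0] [1, 2, 0] 0 6 22)) (.nd .sq
  .sq .sq)) .sq .sq) .sq)) .sq .sq)) .sq)) .sq (.oc [2] [1] [0] 0 3 13)) .sq) .sq .sq)) .sq .sq)
  .sq)) .sq .sq)) .sq)) .sq .sq) .sq)) .sq) .sq (.nd (.nd .sq (.oc [1] [0] [2] 0 3 6) (.nd .sq (.nd
  (.nd .sq (.nd .sq .sq (.nd (.oc [0] [2] [1] 0 3 6) (.nd (.nd .sq .sq (.nd (.nd .sq (.nd (.nd .sq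
  .sq (.nd .sq (.nd (.nd .sq (.nd .sq .sq (.oc [2] [1, 0] [1, 2, 0] 11 17 0)) .sq) .sq (.nd (.nd .sq
  (.oc [1] [0] [2] 0 3 6) (.nd .sq (.nd (.nd .sq (.nd .sq .sq .sq) (.nd (.nd .sq (.oc [1] [0, 2] [0,
  1, 2] 11 17 0) .sq) .sq .sq)) .sq .sq) .sq)) .sq .sq)) .sq)) .sq (.oc [2] [1] [0] 0 3 6)) .sq)
  (.nd .sq .sq (.nd (.nd .sq (.oc [1] [0] [2] 0 3 17) (.nd .sq (.nd (.nd .sq (.nd .sq .sq .sq) (.nd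
  (.nd .sq (.nd (.nd .sq .sq (.nd .sq (.nd (.nd .sq (.nd .sq .sq (.oc [2] [1, 0] [1, 2, 0] 18 24 0))
  .sq) .sq (.nd (.nd .sq (.oc [1] [0] [2] 0 3 6) (.nd .sq (.nd (.nd .sq (.nd .sq .sq (.nd (.oc [0]
  [2] [1] 0 3 6) (.nd (.nd .sq .sq (.nd (.oc [0] [2, 1] [2, 0, 1] 9 0 20) (.nd .sq .sq (.nd (.nd .sq
  (.oc [1] [0] [2] 0 3 17) .sq) .sq .sq)) .sq)) .sq .sq) .sq)) (.nd .sq .sq .sq)) .sq .sq) .sq)) .sq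
  .sq)) .sq)) .sq (.oc [2] [1] [0] 0 3 13)) .sq) .sq .sq)) .sq .sq) .sq)) .sq .sq)) .sq)) .sq .sq)
  .sq)) (.nd (.nd .sq (.nd (.nd .sq .sq (.nd .sq (.nd (.nd .sq (.nd .sq .sq (.nd (.oc [0] [2] [1] 0
  3 13) (.nd (.nd .sq .sq (.nd (.nd .sq (.nd (.nd .sq .sq (.nd .sq (.nd (.nd .sq .sq .sq) .sq (.nd
  (.nd .sq (.oc [1] [0] [2] 0 3 6) (.nd .sq (.nd (.nd .sq (.oc [1] [0, 2] [0, 1, 2] 9 0 20) (.nd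
  (.nd .sq (.nd (.nd .sq .sq (.nd .sq (.nd (.nd .sq (.nd .sq .sq .sq) .sq) .sq (.nd .sq .sq .sq))
  .sq)) .sq (.oc [2] [1] [0] 0 3 17)) .sq) .sq .sq)) .sq .sq) .sq)) .sq .sq)) .sq)) .sq (.oc [2] [1]
  [0] 0 3 6)) .sq) (.nd .sq .sq (.nd (.nd .sq (.oc [1] [0] [2] 0 3 13) (.nd .sq (.nd (.nd .sq (.nd
  .sq .sq (.oc [2] [1, 0] [1, 2, 0] 0 24 11)) (.nd (.nd .sq (.nd (.nd .sq .sq (.nd .sq (.nd (.nd .sq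
  (.nd .sq .sq .sq) .sq) .sq (.nd (.nd .sq (.oc [1] [0] [2] 0 3 6) (.nd .sq (.nd (.nd .sq (.nd .sq
  .sq (.oc [2] [1, 0] [1, 2, 0] 0 6 22)) (.nd .sq .sq .sq)) .sq .sq) .sq)) .sq .sq)) .sq)) .sq (.oc
  [2] [1] [0] 0 3 13)) .sq) .sq .sq)) .sq .sq) .sq)) .sq .sq)) .sq)) .sq .sq) .sq)) .sq) .sq (.nd
  (.nd .sq (.oc [1] [0] [2] 0 3 6) .sq) .sq .sq)) .sq)) .sq (.oc [2] [0] [1] 3 0 10)) .sq) .sq .sq))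
  .sq .sq) .sq)) .sq .sq)) .sq)) .sq (.nd (.nd .sq .sq (.nd .sq (.nd (.nd .sq (.nd .sq .sq (.nd (.nd
  .sq (.nd (.nd .sq .sq (.nd (.nd .sq (.nd .sq .sq (.nd (.nd .sq .sq (.nd .sq (.nd (.nd .sq (.nd .sq
  .sq (.nd .sq (.nd (.oc [0] [1] [2] 4 7 0) .sq .sq) .sq)) (.oc [2] [0] [1] 0 5 8)) .sq (.nd (.oc
  [0] [2] [1] 4 14 0) .sq .sq)) .sq)) (.nd (.oc [0] [1] [2] 11 8 0) .sq .sq) .sq)) .sq) (.oc [1] [2]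
  [0] 0 3 8) .sq)) .sq .sq) (.nd .sq .sq .sq)) (.nd (.oc [0] [1] [2] 4 7 0) .sq .sq) .sq)) (.nd (.nd
  .sq (.nd (.nd .sq .sq (.oc [2] [0] [1] 4 9 0)) .sq (.nd (.nd .sq .sq .sq) (.nd (.oc [0] [1] [2] 6
  9 0) .sq .sq) .sq)) .sq) .sq .sq)) .sq (.nd (.nd .sq (.nd (.nd .sq .sq (.nd (.nd .sq (.nd .sq .sq
  (.nd (.nd .sq .sq (.nd .sq (.nd (.oc [0] [2] [1] 3 0 10) .sq (.nd .sq .sq .sq)) .sq)) (.nd (.nd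
  .sq (.nd .sq .sq (.nd (.nd .sq (.nd (.nd .sq .sq (.nd (.nd .sq (.nd .sq .sq (.nd (.nd .sq .sq (.nd
  .sq (.nd (.oc [0] [1] [2] 0 3 13) .sq (.nd (.nd .sq (.nd (.nd .sq .sq (.nd (.nd .sq (.nd .sq .sq
  (.nd (.nd .sq .sq .sq) (.nd (.nd .sq (.nd .sq .sq (.nd .sq .sq .sq)) (.oc [2] [0] [1] 0 3 6)) .sq
  .sq) .sq)) .sq) (.oc [1] [2] [0] 0 3 6) .sq)) .sq (.nd .sq (.nd (.oc [0] [1, 2] [1, 0, 2] 18 24 0)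
  .sq .sq) .sq)) .sq) .sq .sq)) .sq)) (.nd .sq .sq .sq) .sq)) .sq) (.oc [1] [2] [0] 0 3 17) .sq))
  .sq .sq) (.nd .sq (.oc [1] [2, 0] [2, 1, 0] 0 6 15) .sq)) .sq .sq)) (.oc [2] [0] [1] 0 3 6)) .sq
  .sq) .sq)) .sq) (.oc [1] [2] [0] 0 3 6) .sq)) .sq (.nd .sq (.nd (.nd .sq (.nd .sq .sq (.nd (.nd
  .sq (.nd (.nd .sq .sq (.nd (.nd .sq (.nd .sq .sq (.nd (.nd .sq .sq (.nd .sq (.nd (.oc [0] [1] [2]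
  0 3 13) .sq (.nd (.nd .sq (.nd (.nd .sq .sq (.nd (.nd .sq (.nd .sq .sq (.nd (.nd .sq .sq .sq) (.nd
  (.oc [0] [1, 2] [1, 0, 2] 0 6 22) .sq .sq) .sq)) .sq) (.oc [1] [2] [0] 0 3 6) .sq)) .sq (.nd .sq
  (.nd (.nd .sq (.nd .sq .sq (.nd .sq .sq .sq)) (.oc [2] [0] [1] 0 3 13)) .sq .sq) .sq)) .sq) .sq
  .sq)) .sq)) (.nd (.nd .sq (.nd .sq .sq (.nd (.nd .sq (.nd .sq .sq .sq) (.nd .sq (.oc [1] [2, 0]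
  [2, 1, 0] 0 6 22) .sq)) .sq .sq)) (.oc [2] [0] [1] 0 3 6)) .sq .sq) .sq)) .sq) (.oc [1] [2] [0] 0
  3 13) .sq)) .sq .sq) (.nd .sq (.nd (.oc [0] [1] [2] 0 3 6) .sq (.nd (.nd .sq (.nd (.nd .sq .sq
  (.nd (.nd .sq (.nd .sq .sq (.nd (.nd .sq .sq (.nd .sq (.nd (.oc [0] [1] [2] 0 3 17) .sq (.nd (.nd
  .sq (.nd (.nd .sq .sq .sq) .sq (.nd .sq (.nd (.nd .sq (.nd .sq .sq (.nd (.nd .sq (.nd (.nd .sq .sq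
  (.oc [2] [0, 1] [0, 2, 1] 18 24 0)) .sq .sq) (.nd .sq (.nd (.oc [0] [1] [2] 0 3 6) .sq (.nd .sq
  .sq .sq)) .sq)) .sq .sq)) (.oc [2] [0] [1] 0 3 13)) .sq .sq) .sq)) .sq) .sq .sq)) .sq)) (.oc [1]
  [2, 0] [2, 1, 0] 9 0 20) .sq)) .sq) (.oc [1] [2] [0] 0 3 6) .sq)) .sq (.nd .sq .sq .sq)) .sq) .sq
  .sq)) .sq)) .sq .sq)) (.nd (.nd .sq (.nd (.nd .sq .sq (.oc [2] [0] [1] 4 7 0)) .sq (.nd (.nd .sq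
  .sq (.nd .sq (.nd (.oc [0] [1] [2] 0 3 8) .sq (.nd (.nd .sq (.nd (.nd .sq .sq (.oc [2] [0] [1] 11
  8 0)) .sq .sq) .sq) .sq .sq)) .sq)) (.nd .sq .sq .sq) .sq)) .sq) (.oc [1] [2] [0] 0 5 8) .sq)) .sq
  .sq) .sq)) .sq) .sq .sq)) .sq)) (.nd (.nd .sq (.nd .sq .sq (.nd (.nd .sq (.nd (.nd .sq .sq (.nd
  (.nd .sq (.nd .sq .sq (.nd (.nd .sq .sq (.nd .sq (.nd (.oc [0] [1] [2] 0 3 13) .sq (.nd (.nd .sq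
  (.nd (.nd .sq .sq (.nd (.nd .sq (.nd .sq .sq (.nd (.nd .sq .sq .sq) (.nd (.nd .sq (.nd .sq .sq
  (.nd (.nd .sq (.nd (.nd .sq .sq (.nd (.nd .sq (.nd .sq .sq (.nd (.nd .sq .sq (.nd .sq (.nd (.oc
  [0] [1] [2] 0 3 13) .sq (.nd .sq .sq .sq)) .sq)) (.nd .sq .sq .sq) .sq)) .sq) (.oc [1] [2] [0] 0 3
  17) .sq)) .sq .sq) (.oc [2] [0, 1] [0, 2, 1] 9 0 20)) .sq .sq)) (.oc [2] [0] [1] 0 3 6)) .sq .sq)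
  .sq)) .sq) (.oc [1] [2] [0] 0 3 6) .sq)) .sq (.nd .sq (.nd (.nd .sq (.nd .sq .sq (.nd (.nd .sq
  (.nd (.nd .sq .sq (.nd (.nd .sq (.nd .sq .sq (.nd (.nd .sq .sq (.nd .sq .sq .sq)) (.nd (.nd .sq
  (.nd .sq .sq (.nd (.nd .sq (.nd .sq .sq .sq) (.nd .sq (.oc [1] [2, 0] [2, 1, 0] 0 6 22) .sq)) .sq
  .sq)) (.oc [2] [0] [1] 0 3 6)) .sq .sq) .sq)) .sq) (.oc [1] [2] [0] 0 3 13) .sq)) .sq .sq) (.nd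
  .sq (.oc [1] [2, 0] [2, 1, 0] 0 24 11) .sq)) .sq .sq)) (.oc [2] [0] [1] 0 3 13)) .sq .sq) .sq))
  .sq) .sq .sq)) .sq)) (.nd (.nd .sq (.nd .sq .sq (.nd .sq .sq .sq)) (.oc [2] [0] [1] 0 3 6)) .sq
  .sq) .sq)) .sq) (.oc [1] [0] [2] 3 0 10) .sq)) .sq .sq) (.nd .sq (.nd (.oc [0] [1] [2] 0 3 6) .sq
  (.nd (.nd .sq (.nd (.nd .sq .sq (.nd (.nd .sq (.nd .sq .sq (.nd (.nd .sq .sq (.nd .sq (.oc [1] [2,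
  0] [2, 1, 0] 11 17 0) .sq)) (.nd (.nd .sq (.nd .sq .sq (.nd (.nd .sq (.nd (.nd .sq .sq (.oc [2]
  [0, 1] [0, 2, 1] 11 17 0)) .sq .sq) (.nd .sq (.nd (.oc [0] [1] [2] 0 3 6) .sq (.nd .sq .sq .sq))
  .sq)) .sq .sq)) (.oc [2] [0] [1] 0 3 6)) .sq .sq) .sq)) .sq) (.oc [1] [2] [0] 0 3 6) .sq)) .sq
  (.nd .sq (.nd (.nd .sq (.nd .sq .sq (.nd (.nd .sq (.nd (.nd .sq .sq (.nd (.nd .sq (.nd .sq .sq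
  (.nd (.nd .sq .sq (.nd .sq (.oc [1] [2, 0] [2, 1, 0] 18 24 0) .sq)) (.nd (.nd .sq (.nd .sq .sq
  (.nd (.nd .sq (.nd .sq .sq .sq) (.nd .sq (.nd (.oc [0] [1] [2] 0 3 6) .sq (.nd (.nd .sq (.nd (.oc
  [0] [1, 2] [1, 0, 2] 9 0 20) .sq (.nd .sq (.nd (.nd .sq (.nd .sq .sq (.nd .sq .sq .sq)) (.oc [2]
  [0] [1] 0 3 17)) .sq .sq) .sq)) .sq) .sq .sq)) .sq)) .sq .sq)) (.oc [2] [0] [1] 0 3 6)) .sq .sq)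
  .sq)) .sq) (.oc [1] [2] [0] 0 3 13) .sq)) .sq .sq) (.nd .sq .sq .sq)) .sq .sq)) (.oc [2] [1] [0] 3
  0 10)) .sq .sq) .sq)) .sq) .sq .sq)) .sq)) .sq .sq)) (.nd (.nd .sq (.nd (.nd .sq .sq (.oc [2] [0]
  [1] 4 7 0)) .sq .sq) .sq) (.nd .sq .sq (.nd (.nd .sq (.oc [1] [0] [2] 0 3 8) (.nd .sq (.nd (.nd
  .sq (.nd .sq .sq (.oc [2] [1] [0] 11 8 0)) (.nd (.nd .sq (.nd (.nd .sq .sq (.oc [2] [0] [1] 4 14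
  0)) .sq (.nd (.oc [0] [2] [1] 0 5 8) (.nd (.nd .sq (.nd .sq .sq (.oc [2] [1] [0] 4 7 0)) (.nd (.nd
  .sq .sq .sq) (.nd .sq .sq (.nd (.nd .sq (.oc [1] [0] [2] 0 3 8) .sq) .sq .sq)) .sq)) .sq .sq)
  .sq)) .sq) .sq .sq)) .sq .sq) .sq)) .sq .sq)) .sq)) .sq .sq) .sq)) .sq) (.nd (.nd .sq (.nd .sq .sq
  (.nd (.nd .sq (.nd (.nd .sq .sq (.nd (.nd .sq (.oc [1] [0] [2] 4 9 0) .sq) (.nd (.nd .sq (.nd .sq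
  .sq (.nd .sq (.nd (.oc [0] [1] [2] 4 9 0) .sq .sq) .sq)) .sq) .sq (.nd (.oc [0] [2] [1] 6 9 0) .sq
  .sq)) .sq)) .sq .sq) (.nd .sq (.nd (.nd .sq (.nd .sq .sq .sq) (.nd (.nd .sq (.nd (.nd .sq .sq (.nd
  .sq (.nd (.nd .sq (.nd .sq .sq (.nd (.nd .sq (.oc [1] [0] [2] 0 5 8) (.nd .sq (.nd (.nd .sq (.nd
  .sq .sq .sq) (.nd .sq .sq .sq)) .sq (.nd (.oc [0] [2] [1] 4 7 0) .sq .sq)) .sq)) (.nd (.oc [0] [1]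
  [2] 4 14 0) .sq .sq) .sq)) .sq) .sq (.nd (.oc [0] [2] [1] 11 8 0) .sq .sq)) .sq)) .sq (.oc [2] [1]
  [0] 0 3 8)) .sq) .sq .sq)) .sq (.nd (.oc [0] [2] [1] 4 7 0) .sq .sq)) .sq)) (.nd (.nd .sq .sq (.nd
  (.nd .sq (.nd (.nd .sq .sq (.nd .sq (.nd (.nd .sq (.nd .sq .sq (.nd (.oc [0] [1] [2] 3 0 10) (.nd
  (.nd .sq .sq (.nd .sq (.nd .sq .sq (.nd (.nd .sq (.oc [1] [0] [2] 0 3 13) (.nd .sq (.nd (.nd .sq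
  (.nd .sq .sq (.nd (.oc [0] [2] [1] 0 3 6) (.nd (.nd .sq .sq (.nd (.nd .sq (.nd (.nd .sq .sq (.nd
  .sq (.nd (.nd .sq (.nd .sq .sq (.nd (.oc [0] [2] [1] 0 3 17) (.nd (.nd .sq .sq (.nd (.nd .sq .sq
  .sq) (.nd .sq .sq .sq) .sq)) .sq .sq) .sq)) .sq) .sq (.oc [2] [1, 0] [1, 2, 0] 9 0 20)) .sq)) .sq
  (.oc [2] [1] [0] 0 3 6)) .sq) (.nd .sq .sq .sq) .sq)) .sq .sq) .sq)) (.nd (.nd .sq (.nd (.nd .sq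
  .sq (.nd .sq (.nd (.nd .sq (.nd .sq .sq (.nd (.oc [0] [2] [1] 0 3 13) (.nd (.nd .sq .sq (.nd (.nd
  .sq (.nd (.nd .sq .sq (.nd .sq (.nd (.nd .sq .sq .sq) .sq (.nd (.oc [0] [2, 1] [2, 0, 1] 0 6 22)
  .sq .sq)) .sq)) .sq (.oc [2] [1] [0] 0 3 6)) .sq) (.nd .sq .sq (.nd .sq .sq .sq)) .sq)) .sq .sq)
  .sq)) .sq) .sq (.nd (.oc [0] [2, 1] [2, 0, 1] 0 24 11) .sq .sq)) .sq)) .sq (.oc [2] [1] [0] 0 3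
  13)) .sq) .sq .sq)) .sq .sq) .sq)) .sq .sq)) .sq)) .sq .sq) .sq)) .sq) .sq (.nd (.nd .sq (.oc [1]
  [0] [2] 0 3 6) (.nd .sq (.nd (.nd .sq (.nd .sq .sq (.nd (.oc [0] [2] [1] 0 3 6) (.nd (.nd .sq .sq
  (.nd (.nd .sq (.nd (.nd .sq .sq (.nd .sq (.nd (.nd .sq (.nd .sq .sq (.oc [2] [1, 0] [1, 2, 0] 11
  17 0)) .sq) .sq .sq) .sq)) .sq (.oc [2] [1] [0] 0 3 6)) .sq) (.nd .sq .sq (.nd (.oc [0] [2, 1] [2,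
  0, 1] 11 17 0) .sq .sq)) .sq)) .sq .sq) .sq)) (.nd (.nd .sq (.nd (.nd .sq .sq (.nd .sq (.nd (.nd
  .sq (.nd .sq .sq (.nd (.oc [0] [2] [1] 0 3 13) (.nd (.nd .sq .sq (.nd (.nd .sq (.nd (.nd .sq .sq
  (.nd .sq (.nd (.nd .sq .sq .sq) .sq (.nd (.nd .sq (.oc [1] [0] [2] 0 3 6) (.nd .sq (.nd (.nd .sq
  (.oc [1] [0, 2] [0, 1, 2] 9 0 20) (.nd .sq .sq .sq)) .sq .sq) .sq)) .sq .sq)) .sq)) .sq (.oc [2]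
  [1] [0] 0 3 6)) .sq) (.nd .sq .sq (.nd (.oc [0] [2, 1] [2, 0, 1] 18 24 0) .sq .sq)) .sq)) .sq .sq)
  .sq)) .sq) .sq (.nd .sq .sq .sq)) .sq)) .sq (.oc [2] [1] [0] 0 3 17)) .sq) .sq .sq)) .sq .sq)
  .sq)) .sq .sq)) .sq)) .sq (.oc [2] [1] [0] 0 3 6)) .sq) (.nd .sq .sq (.nd (.nd .sq (.nd (.nd .sq
  .sq (.nd (.nd .sq (.oc [1] [0] [2] 4 7 0) .sq) (.nd (.nd .sq (.nd .sq .sq (.nd (.oc [0] [2] [1] 0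
  3 8) (.nd (.nd .sq .sq (.nd (.nd .sq (.oc [1] [0] [2] 11 8 0) .sq) (.nd .sq .sq (.nd .sq .sq .sq))
  .sq)) .sq .sq) .sq)) .sq) .sq (.nd .sq .sq .sq)) .sq)) .sq (.oc [2] [1] [0] 0 5 8)) (.nd .sq (.nd
  (.nd .sq (.nd .sq .sq (.nd (.oc [0] [2] [1] 0 3 6) (.nd (.nd .sq .sq (.nd (.nd .sq (.nd (.nd .sq
  .sq (.nd .sq (.nd (.nd .sq (.nd .sq .sq (.nd (.oc [0] [2] [1] 0 3 17) (.nd (.nd .sq .sq (.nd (.nd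
  .sq .sq .sq) (.nd .sq .sq (.nd (.nd .sq (.oc [1] [0] [2] 0 3 13) (.nd .sq (.nd (.nd .sq (.nd .sq
  .sq (.nd (.oc [0] [2] [1] 0 3 6) (.nd (.nd .sq .sq (.nd .sq (.nd .sq .sq .sq) .sq)) .sq .sq) .sq))
  (.nd (.nd .sq (.oc [1] [0, 2] [0, 1, 2] 18 24 0) .sq) .sq .sq)) .sq .sq) .sq)) .sq .sq)) .sq)) .sq
  .sq) .sq)) .sq) .sq (.nd (.oc [0] [2, 1] [2, 0, 1] 0 6 15) .sq .sq)) .sq)) .sq (.oc [2] [1] [0] 0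
  3 6)) .sq) (.nd .sq .sq .sq) .sq)) .sq .sq) .sq)) (.nd (.nd .sq (.nd (.nd .sq .sq (.nd .sq (.nd
  (.nd .sq (.nd .sq .sq (.nd (.oc [0] [2] [1] 0 3 13) (.nd (.nd .sq .sq (.nd (.nd .sq (.nd (.nd .sq
  .sq (.nd .sq (.nd (.nd .sq .sq .sq) .sq (.nd (.oc [0] [2, 1] [2, 0, 1] 0 6 22) .sq .sq)) .sq)) .sq
  (.oc [2] [1] [0] 0 3 6)) .sq) (.nd .sq .sq (.nd (.nd .sq (.oc [1] [0] [2] 0 3 13) (.nd .sq (.nd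
  (.nd .sq (.nd .sq .sq (.nd (.oc [0] [2] [1] 0 3 6) (.nd (.nd .sq .sq (.nd (.nd .sq (.oc [1] [0, 2]
  [0, 1, 2] 0 6 22) .sq) (.nd .sq .sq .sq) .sq)) .sq .sq) .sq)) (.nd .sq .sq .sq)) .sq .sq) .sq))
  .sq .sq)) .sq)) .sq .sq) .sq)) .sq) .sq (.nd (.nd .sq (.oc [1] [0] [2] 0 3 6) (.nd .sq (.nd (.nd
  .sq (.nd .sq .sq (.nd (.oc [0] [2] [1] 0 3 6) (.nd (.nd .sq .sq (.nd (.oc [0] [2, 1] [2, 0, 1] 9 0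
  20) (.nd .sq .sq (.nd (.nd .sq (.oc [1] [0] [2] 0 3 17) (.nd .sq (.nd (.nd .sq (.nd .sq .sq .sq)
  (.nd (.nd .sq (.nd (.nd .sq .sq (.nd .sq (.nd (.nd .sq (.nd .sq .sq (.oc [2] [1, 0] [1, 2, 0] 18
  24 0)) .sq) .sq .sq) .sq)) .sq (.oc [2] [1] [0] 0 3 13)) .sq) .sq .sq)) .sq .sq) .sq)) .sq .sq))
  .sq)) .sq .sq) .sq)) (.nd .sq .sq .sq)) .sq .sq) .sq)) .sq .sq)) .sq)) .sq (.oc [2] [1] [0] 0 3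
  13)) .sq) .sq .sq)) .sq .sq) .sq)) .sq .sq)) .sq)) .sq .sq) .sq)) .sq) .sq (.nd (.nd .sq (.nd (.nd
  .sq .sq (.nd (.nd .sq (.oc [1] [0] [2] 4 7 0) .sq) (.nd (.nd .sq (.nd .sq .sq (.nd (.oc [0] [2]
  [1] 0 3 8) (.nd (.nd .sq .sq (.nd (.nd .sq (.oc [1] [0] [2] 11 8 0) .sq) (.nd .sq .sq (.nd (.nd
  .sq (.nd (.nd .sq .sq (.nd (.nd .sq (.oc [1] [0] [2] 4 7 0) .sq) (.nd (.nd .sq (.nd .sq .sq .sq)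
  .sq) .sq (.nd .sq .sq .sq)) .sq)) .sq (.oc [2] [1] [0] 0 5 8)) (.nd .sq (.oc [1] [2] [0] 4 14 0)
  .sq)) .sq .sq)) .sq)) .sq .sq) .sq)) .sq) .sq (.nd .sq .sq .sq)) .sq)) .sq (.nd .sq (.nd (.nd .sq
  (.nd .sq .sq (.nd (.nd .sq (.nd (.nd .sq .sq (.nd (.nd .sq (.oc [1] [0] [2] 4 14 0) .sq) (.nd (.oc
  [0] [1] [2] 0 5 8) .sq (.nd (.nd .sq (.nd (.nd .sq .sq .sq) .sq (.nd .sq (.nd (.nd .sq (.nd .sq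
  .sq (.nd .sq .sq .sq)) (.oc [2] [0] [1] 0 3 8)) .sq .sq) .sq)) (.nd .sq (.oc [1] [2] [0] 4 7 0)
  .sq)) .sq .sq)) .sq)) .sq .sq) (.nd .sq (.oc [1] [2] [0] 11 8 0) .sq)) .sq .sq)) (.nd (.nd .sq
  (.oc [1] [0] [2] 6 9 0) .sq) (.nd .sq .sq (.nd (.nd .sq (.nd (.nd .sq .sq (.oc [2] [0] [1] 6 9 0))
  .sq .sq) (.nd .sq (.oc [1] [2] [0] 4 9 0) .sq)) .sq .sq)) .sq)) .sq .sq) .sq)) (.nd .sq (.nd (.nd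
  .sq (.nd .sq .sq (.nd (.oc [0] [2] [1] 0 3 6) (.nd (.nd .sq .sq (.nd (.nd .sq (.nd (.nd .sq .sq
  (.nd .sq (.nd (.nd .sq (.nd .sq .sq (.nd (.oc [0] [2] [1] 0 3 17) (.nd (.nd .sq .sq (.nd (.nd .sq
  .sq .sq) (.nd .sq .sq (.nd (.nd .sq (.oc [1] [0] [2] 0 3 13) (.nd .sq (.nd (.nd .sq (.nd .sq .sq
  (.nd (.oc [0] [2] [1] 0 3 6) (.nd (.nd .sq .sq (.nd (.nd .sq (.nd (.nd .sq .sq (.nd .sq (.nd (.nd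
  .sq (.nd .sq .sq .sq) .sq) .sq (.oc [2] [1, 0] [1, 2, 0] 9 0 20)) .sq)) .sq (.oc [2] [1] [0] 0 3
  6)) .sq) (.nd .sq .sq .sq) .sq)) .sq .sq) .sq)) (.nd (.nd .sq (.oc [1] [0, 2] [0, 1, 2] 18 24 0)
  .sq) .sq .sq)) .sq .sq) .sq)) .sq .sq)) .sq)) .sq .sq) .sq)) .sq) .sq (.nd (.nd .sq (.oc [1] [0]
  [2] 0 3 6) (.nd .sq (.nd (.nd .sq (.nd .sq .sq (.nd (.oc [0] [2] [1] 0 3 6) (.nd (.nd .sq .sq (.nd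
  .sq (.nd .sq .sq (.nd (.oc [0] [2, 1] [2, 0, 1] 11 17 0) .sq .sq)) .sq)) .sq .sq) .sq)) (.nd (.nd
  .sq (.oc [1] [0, 2] [0, 1, 2] 11 17 0) .sq) .sq .sq)) .sq .sq) .sq)) .sq .sq)) .sq)) .sq (.oc [2]
  [1] [0] 0 3 6)) .sq) (.nd .sq .sq (.nd (.nd .sq (.oc [1] [2] [0] 3 0 10) (.nd .sq (.nd (.nd .sq
  (.nd .sq .sq .sq) (.nd (.nd .sq (.nd (.nd .sq .sq (.nd .sq (.nd (.nd .sq (.nd .sq .sq (.nd (.oc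
  [0] [2] [1] 0 3 13) (.nd (.nd .sq .sq (.nd (.nd .sq (.oc [1] [0, 2] [0, 1, 2] 0 24 11) .sq) (.nd
  .sq .sq (.nd (.nd .sq (.oc [1] [0] [2] 0 3 13) (.nd .sq (.nd (.nd .sq (.nd .sq .sq (.nd (.oc [0]
  [2] [1] 0 3 6) (.nd (.nd .sq .sq (.nd (.nd .sq (.oc [1] [0, 2] [0, 1, 2] 0 6 22) .sq) (.nd .sq .sq
  .sq) .sq)) .sq .sq) .sq)) (.nd (.nd .sq .sq .sq) .sq .sq)) .sq .sq) .sq)) .sq .sq)) .sq)) .sq .sq)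
  .sq)) .sq) .sq (.nd (.nd .sq (.oc [1] [0] [2] 0 3 6) (.nd .sq (.nd (.nd .sq (.nd .sq .sq (.nd (.oc
  [0] [2] [1] 0 3 6) (.nd (.nd .sq .sq (.nd (.oc [0] [2, 1] [2, 0, 1] 9 0 20) (.nd .sq .sq (.nd (.nd
  .sq (.oc [1] [0] [2] 0 3 17) (.nd .sq (.nd (.nd .sq (.nd .sq .sq .sq) (.nd .sq .sq .sq)) .sq .sq)
  .sq)) .sq .sq)) .sq)) .sq .sq) .sq)) (.nd .sq .sq .sq)) .sq .sq) .sq)) .sq .sq)) .sq)) .sq (.oc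
  [2] [1] [0] 0 3 13)) .sq) .sq .sq)) .sq .sq) .sq)) .sq .sq)) .sq)) .sq .sq) .sq)) (.nd (.nd .sq
  (.nd (.nd .sq .sq (.nd .sq (.nd (.nd .sq (.nd .sq .sq (.nd (.oc [0] [2] [1] 0 3 13) (.nd (.nd .sq
  .sq (.nd (.nd .sq (.nd (.nd .sq .sq (.nd .sq (.nd (.nd .sq .sq .sq) .sq (.nd (.nd .sq (.oc [1] [0]
  [2] 0 3 6) (.nd .sq (.nd (.nd .sq (.oc [1] [0, 2] [0, 1, 2] 9 0 20) (.nd (.nd .sq (.nd (.nd .sq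
  .sq (.nd .sq (.nd (.nd .sq (.nd .sq .sq (.nd (.oc [0] [2] [1] 0 3 13) (.nd (.nd .sq .sq (.nd .sq
  (.nd .sq .sq (.nd (.oc [0] [2, 1] [2, 0, 1] 18 24 0) .sq .sq)) .sq)) .sq .sq) .sq)) .sq) .sq (.nd
  .sq .sq .sq)) .sq)) .sq (.oc [2] [1] [0] 0 3 17)) .sq) .sq .sq)) .sq .sq) .sq)) .sq .sq)) .sq))
  .sq (.oc [2] [1] [0] 0 3 6)) .sq) (.nd .sq .sq (.nd (.nd .sq (.oc [1] [0] [2] 0 3 13) (.nd .sq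
  (.nd (.nd .sq (.nd .sq .sq (.nd (.oc [0] [2] [1] 0 3 6) (.nd (.nd .sq .sq (.nd (.nd .sq (.oc [1]
  [0, 2] [0, 1, 2] 0 6 22) .sq) (.nd .sq .sq .sq) .sq)) .sq .sq) .sq)) (.nd (.nd .sq (.nd (.nd .sq
  .sq (.nd .sq (.nd (.nd .sq (.nd .sq .sq .sq) .sq) .sq (.nd (.nd .sq (.oc [1] [0] [2] 0 3 6) (.nd
  .sq (.nd (.nd .sq (.nd .sq .sq (.oc [2] [1, 0] [1, 2, 0] 0 6 22)) (.nd .sq .sq .sq)) .sq .sq)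
  .sq)) .sq .sq)) .sq)) .sq (.oc [2] [1] [0] 0 3 13)) .sq) .sq .sq)) .sq .sq) .sq)) .sq .sq)) .sq))
  .sq .sq) .sq)) .sq) .sq (.nd (.nd .sq (.oc [1] [0] [2] 0 3 6) (.nd .sq (.nd (.nd .sq (.nd .sq .sq
  (.nd (.oc [0] [2] [1] 0 3 6) (.nd (.nd .sq .sq (.nd (.nd .sq (.oc [1] [0, 2] [0, 1, 2] 0 6 15)
  .sq) (.nd .sq .sq (.nd (.nd .sq (.oc [1] [0] [2] 0 3 17) (.nd .sq (.nd (.nd .sq (.nd .sq .sq .sq)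
  (.nd (.nd .sq (.nd (.nd .sq .sq (.nd .sq (.nd (.nd .sq (.nd .sq .sq (.oc [2] [1, 0] [1, 2, 0] 18
  24 0)) .sq) .sq (.nd (.nd .sq (.oc [1] [0] [2] 0 3 6) (.nd .sq (.nd (.nd .sq (.nd .sq .sq .sq)
  (.nd .sq .sq .sq)) .sq .sq) .sq)) .sq .sq)) .sq)) .sq (.oc [2] [1] [0] 0 3 13)) .sq) .sq .sq)) .sq
  .sq) .sq)) .sq .sq)) .sq)) .sq .sq) .sq)) (.nd .sq .sq .sq)) .sq .sq) .sq)) .sq .sq)) .sq)) .sq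
  (.nd (.oc [0] [2] [1] 0 5 8) (.nd (.nd .sq (.nd .sq .sq (.oc [2] [1] [0] 4 7 0)) (.nd (.nd .sq .sq
  .sq) (.nd .sq .sq (.nd (.nd .sq (.oc [1] [0] [2] 0 3 8) (.nd .sq (.nd (.nd .sq (.nd .sq .sq (.oc
  [2] [1] [0] 11 8 0)) (.nd (.nd .sq (.nd (.nd .sq .sq (.oc [2] [0] [1] 4 14 0)) .sq .sq) .sq) .sq
  .sq)) .sq .sq) .sq)) .sq .sq)) .sq)) .sq .sq) .sq)) .sq) .sq .sq)) .sq .sq) .sq)) .sq .sq)) .sq)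

theorem searchTree_valid : searchTree.Valid 46 [0, 1] = true := by decide +kernel

lemma exists_perm_eq_zero_eq_one :
    ∀ a b : Fin 3, a ≠ b → ∃ σ : Equiv.Perm (Fin 3), σ a = 0 ∧ σ b = 1 := by
  decide

theorem IsSquareFreeList.hasSmallOccurrence {v : List (Fin 3)} (hv : IsSquareFreeList v)
    (hlen : v.length = 48) : HasSmallOccurrence v := by
  obtain ⟨a, b, hab⟩ := List.length_eq_two.mp (by simp [hlen] : (v.drop 46).length = 2)
  set r := v.take 46
  have hv' : v = r ++ [a, b] := by rw [← hab, List.take_append_drop]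
  have hne : a ≠ b := by
    rintro rfl
    exact hv [a] (List.cons_ne_nil _ _) ⟨r, [], by simp [hv']⟩
  obtain ⟨σ, hσa, hσb⟩ := exists_perm_eq_zero_eq_one a b hne
  have hσ : v.map σ = r.map σ ++ [0, 1] := by simp [hv', hσa, hσb]
  have hocc := SearchTree.Valid.hasSmallOccurrence searchTree_valid (r.map σ)
    (by simp [r, hlen]) (hσ ▸ hv.map σ.left_inv)
  simpa [← hσ, List.map_map] using hocc.map σ.symm

structure IsFactorialExtendable (L : Set (List α)) : Prop where
  nil_mem : [] ∈ L
  mem_of_infix {u v : List α} : u <:+: v → v ∈ L → u ∈ L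
  exists_append_mem : ∀ u ∈ L, ∃ a, u ++ [a] ∈ L

namespace IsFactorialExtendable

variable {L : Set (List α)}

lemma factors (w : ℕ → α) : IsFactorialExtendable {u | IsFactorOf u w} where
  nil_mem := ⟨0, rfl⟩
  mem_of_infix huv hv := IsFactorOf.of_infix huv hv
  exists_append_mem u := by
    rintro ⟨i, hi⟩
    refine ⟨w (i + u.length), i, ?_⟩
    rw [List.length_append, extract_add, ← hi]
    simp [extract]

lemma exists_length_eq (hL : IsFactorialExtendable L) (n : ℕ) : ∃ v ∈ L, v.length = n := by
  induction n with
  | zero => exact ⟨[], hL.nil_mem, rfl⟩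
  | succ n ih =>
    obtain ⟨v, hv, rfl⟩ := ih
    obtain ⟨a, ha⟩ := hL.exists_append_mem v hv
    exact ⟨v ++ [a], ha, by simp⟩

lemma sInter [Finite α] {c : Set (Set (List α))} (hc : IsChain (· ⊆ ·) c) (hne : c.Nonempty)
    (h : ∀ L ∈ c, IsFactorialExtendable L) : IsFactorialExtendable (⋂₀ c) where
  nil_mem L hL := (h L hL).nil_mem
  mem_of_infix huv hv L hL := (h L hL).mem_of_infix huv (hv L hL)
  exists_append_mem u hu := by
    by_contra! hnone
    have hout : ∀ a, ∃ L : c, u ++ [a] ∉ (L : Set (List α)) := fun a => by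
      simpa [Set.mem_sInter] using hnone a
    choose L hL using hout
    have : Nonempty c := hne.to_subtype
    have hc' : IsChain (fun s t : Set (List α) => t ⊆ s) c := hc.symm
    have hdir : Directed (fun s t : Set (List α) => t ⊆ s) ((↑) : c → Set (List α)) :=
      directedOn_iff_directed.mp hc'.directedOn
    obtain ⟨M, hM⟩ := hdir.finite_le L
    obtain ⟨a, ha⟩ := (h M M.2).exists_append_mem u (hu M M.2)
    exact hL a (hM a ha)

lemma exists_minimal_subset [Finite α] (hL : IsFactorialExtendable L) :
    ∃ M ⊆ L, Minimal IsFactorialExtendable M :=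
  zorn_superset_nonempty {L | IsFactorialExtendable L}
    (fun c hcS hc hne => ⟨⋂₀ c, sInter hc hne hcS, fun _ => Set.sInter_subset_of_mem⟩) L hL

end IsFactorialExtendable

def extensionsAvoiding (L : Set (List α)) (u : List α) : Set (List α) :=
  {t | ∀ K, ∃ y : List α, K ≤ y.length ∧ t ++ y ∈ L ∧ ¬ u <:+: t ++ y}

lemma isFactorialExtendable_extensionsAvoiding [Finite α] {L : Set (List α)} {u : List α}
    (hL : IsFactorialExtendable L) (hlong : ∀ K, ∃ v ∈ L, K ≤ v.length ∧ ¬ u <:+: v) :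
    IsFactorialExtendable (extensionsAvoiding L u) where
  nil_mem K := by
    obtain ⟨v, hv, hKv, huv⟩ := hlong K
    exact ⟨v, hKv, by simpa using hv, by simpa using huv⟩
  mem_of_infix := by
    rintro s t ⟨a, b, rfl⟩ ht K
    obtain ⟨y, hKy, hy, huy⟩ := ht K
    have hinf : s ++ (b ++ y) <:+: a ++ s ++ b ++ y := ⟨a, [], by simp⟩
    exact ⟨b ++ y, by simp; omega, hL.mem_of_infix hinf hy, fun h => huy (h.trans hinf)⟩
  exists_append_mem t ht := by
    by_contra! hnone
    have hbound : ∀ a, ∃ K, ∀ y : List α, K ≤ y.length → t ++ a :: y ∈ L →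
        u <:+: t ++ a :: y := fun a => by
      simpa [extensionsAvoiding] using hnone a
    choose K hK using hbound
    obtain ⟨M, hM⟩ := Finite.exists_le K
    obtain ⟨_ | ⟨a, y⟩, hMy, hy, huy⟩ := ht (M + 1)
    · simp at hMy
    · exact huy (hK a y (by simp at hMy; linarith [hM a]) hy)

namespace Minimal

variable [Finite α] {L : Set (List α)}

/-- If `u` were missing from arbitrarily long words of `L`, the words with arbitrarily long
`u`-free right extensions would form a smaller factorial extendable language. -/
lemma exists_forall_infix (hL : Minimal IsFactorialExtendable L) {u : List α} (hu : u ∈ L) :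
    ∃ K, ∀ v ∈ L, K ≤ v.length → u <:+: v := by
  by_contra! hlong
  have hsub : extensionsAvoiding L u ⊆ L := fun t ht => by
    obtain ⟨y, -, hy, -⟩ := ht 0
    exact hL.prop.mem_of_infix (List.prefix_append t y).isInfix hy
  obtain ⟨y, -, -, huy⟩ := hL.2 (isFactorialExtendable_extensionsAvoiding hL.prop hlong) hsub hu 0
  exact huy (List.prefix_append u y).isInfix

lemma exists_append_append_mem (hL : Minimal IsFactorialExtendable L) {v : List α}
    (hv : v ∈ L) : ∃ z, v ++ z ++ v ∈ L := by
  obtain ⟨K, hK⟩ := hL.exists_forall_infix hv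
  obtain ⟨V, hV, hlen⟩ := hL.prop.exists_length_eq (K + K)
  have hmem (s : List α) (hs : s <:+: V) (hsK : s.length = K) : v <:+: s :=
    hK s (hL.prop.mem_of_infix hs hV) hsK.ge
  obtain ⟨a, b, hab⟩ := hmem (V.take K) (List.take_prefix K V).isInfix (by simp; omega)
  obtain ⟨c, d, hcd⟩ := hmem (V.drop K) (List.drop_suffix K V).isInfix (by simp; omega)
  refine ⟨b ++ c, hL.prop.mem_of_infix ⟨a, d, ?_⟩ hV⟩
  rw [← List.take_append_drop K V, ← hab, ← hcd]
  simp

end Minimal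

theorem not_avoids_of_fin_three (w : ℕ → Fin 3) : ¬ Avoids w impFormula := by
  obtain ⟨L, hLw, hL⟩ := (IsFactorialExtendable.factors w).exists_minimal_subset
  by_cases hsq : ∃ u, u ≠ [] ∧ u ++ u ∈ L
  · obtain ⟨u, hu, huu⟩ := hsq
    obtain ⟨m, hm⟩ := hL.exists_append_append_mem huu
    obtain ⟨n, hn⟩ := hL.exists_append_append_mem hm
    exact not_avoids_of_square hu m n (hLw hn)
  · obtain ⟨v, hv, hlen⟩ := hL.prop.exists_length_eq 48
    have hsf : IsSquareFreeList v := fun x hx hxx => hsq ⟨x, hx, hL.prop.mem_of_infix hxx hv⟩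
    obtain ⟨h, hocc, -⟩ := hsf.hasSmallOccurrence hlen
    exact fun hav => hav h (hocc.occursIn (hLw hv))

theorem four_le_lamIdx : 4 ≤ lamIdx impFormula := by
  refine le_csInf ⟨4, paperfoldingWord, paperfoldingWord_avoids⟩ ?_
  rintro (_ | m) ⟨w, hw⟩
  · exact (w 0).elim0
  by_contra! hm
  obtain ⟨r, hr⟩ := (Fin.castLE_injective (show m + 1 ≤ 3 by omega)).hasLeftInverse
  exact not_avoids_of_fin_three (Fin.castLE _ ∘ w) fun h hocc => hw _ (hocc.of_comp hr)

theorem SquareFree.exists_small_occursIn {w : ℕ → Fin 3} (hw : SquareFree w) :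
    ∃ h : Fin 3 → List (Fin 3), OccursIn impFormula h w ∧
      (h 0).length = 1 ∧ (h 1).length ≤ 2 ∧ (h 2).length ≤ 3 := by
  have hprefix := isFactorOf_extract w 0 48
  obtain ⟨h, hocc, hsmall⟩ :=
    (IsSquareFreeList.of_isFactorOf hw hprefix).hasSmallOccurrence (extract_length w 0 48)
  exact ⟨h, hocc.occursIn hprefix, hsmall⟩

end

/-- every recurrent word avoiding ABCA.ACBA.ABCBA is square-free; no
infinite ternary square-free word avoids all occurrences h of the formula with
|h(A)| = 1, |h(B)| ≤ 2, |h(C)| ≤ 3; consequently λ(ABCA.ACBA.ABCBA) ≥ 4. -/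
theorem stmt18 :
    (∀ (α : Type*) (w : ℕ → α), Recurrent w → Avoids w impFormula → SquareFree w) ∧
    (∀ w : ℕ → Fin 3, SquareFree w → ∃ h : Fin 3 → List (Fin 3),
      OccursIn impFormula h w ∧
      (h 0).length = 1 ∧ (h 1).length ≤ 2 ∧ (h 2).length ≤ 3) ∧
    4 ≤ lamIdx impFormula :=
  ⟨fun _ _ hrec hav => hrec.squareFree_of_avoids hav, fun _ hw => hw.exists_small_occursIn,
    four_le_lamIdx⟩
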